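/- arXiv:2205.12814 — 8 statements merged into one kernel-verified Lean document; each statement's English description precedes it below -/
import Mathlib

section
/- Let θ be a connected skew diagram and let t be its unique box on the highest diagonal (the box maximizing j−i). Then every box a ∈ θ with a ≠ t has an adjacent box in θ lying on a strictly higher diagonal; consequently, every box of θ is connected to t by a path of adjacent boxes with strictly increasing diagonal values. -/
/-- A cell (box) of the plane: `(row, column)`. -/
abbrev Cell : Type := ℤ × ℤ

/-- The diagonal value `j − i` of a cell `(i, j)`. -/
def diagVal (c : Cell) : ℤ := c.2 - c.1

/-- Two cells are adjacent if they differ by 1 in exactly one coordinate. -/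
def CellAdj (a b : Cell) : Prop :=
  (a.1 = b.1 ∧ (a.2 = b.2 + 1 ∨ b.2 = a.2 + 1)) ∨
  (a.2 = b.2 ∧ (a.1 = b.1 + 1 ∨ b.1 = a.1 + 1))

/-- A finite set of cells is a skew diagram iff it is order-convex for the
componentwise order. -/
def IsSkewDiagram (S : Finset Cell) : Prop :=
  ∀ a b c : Cell, a ∈ S → b ∈ S → a ≤ c → c ≤ b → c ∈ S

/-- A skew diagram is connected iff no NW-SE anti-diagonal line partitions it into
two nonempty parts, one strictly northeast and one strictly southwest of the line. -/
def SkewConnected (S : Finset Cell) : Prop :=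
  ¬ ∃ d : ℤ, (∀ c ∈ S, diagVal c ≠ d) ∧ (∃ c ∈ S, diagVal c < d) ∧ (∃ c ∈ S, d < diagVal c)

/-!
The box `t` is the only box on the top diagonal: two boxes on a common diagonal are comparable,
and order-convexity would then put the corner box between them on a strictly higher diagonal.
Connectedness means that every diagonal between that of a box `a ≠ t` and that of `t` is occupied,
in particular diagonal `diagVal a + 1`; order-convexity, applied to `a` and a box `c` there, puts the
right or the upper neighbour of `a` into `S`. Iterating this step climbs from `a` to `t`.
-/

theorem IsSkewDiagram.diagVal_lt_of_ne {S : Finset Cell} (hS : IsSkewDiagram S) {a t : Cell}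
    (ha : a ∈ S) (ht : t ∈ S) (htmax : ∀ c ∈ S, diagVal c ≤ diagVal t) (hat : a ≠ t) :
    diagVal a < diagVal t := by
  refine (htmax a ha).lt_of_ne fun hdiag => ?_
  obtain ⟨i, j⟩ := a
  obtain ⟨p, q⟩ := t
  simp only [diagVal] at hdiag htmax
  rcases lt_trichotomy i p with h | rfl | h
  · have := htmax (i, q) <| hS _ _ _ ha ht
      (Prod.mk_le_mk.2 ⟨le_rfl, by omega⟩) (Prod.mk_le_mk.2 ⟨h.le, le_rfl⟩)
    omega
  · exact hat (Prod.ext rfl (by simp only; omega))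
  · have := htmax (p, j) <| hS _ _ _ ht ha
      (Prod.mk_le_mk.2 ⟨le_rfl, by omega⟩) (Prod.mk_le_mk.2 ⟨h.le, le_rfl⟩)
    omega

theorem SkewConnected.exists_diagVal_eq {S : Finset Cell} (hconn : SkewConnected S) {a b : Cell}
    (ha : a ∈ S) (hb : b ∈ S) {d : ℤ} (had : diagVal a < d) (hdb : d ≤ diagVal b) :
    ∃ c ∈ S, diagVal c = d := by
  by_contra! hno
  exact hconn ⟨d, hno, ⟨a, ha, had⟩, ⟨b, hb, hdb.lt_of_ne' (hno b hb)⟩⟩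

theorem IsSkewDiagram.exists_adj_diagVal_succ {S : Finset Cell} (hS : IsSkewDiagram S)
    {a c : Cell} (ha : a ∈ S) (hc : c ∈ S) (hca : diagVal c = diagVal a + 1) :
    ∃ b ∈ S, CellAdj a b ∧ diagVal b = diagVal a + 1 := by
  obtain ⟨i, j⟩ := a
  obtain ⟨k, l⟩ := c
  simp only [diagVal] at hca ⊢
  rcases le_or_gt i k with h | h
  · refine ⟨(i, j + 1), hS _ _ _ ha hc (Prod.mk_le_mk.2 ⟨le_rfl, by omega⟩)
      (Prod.mk_le_mk.2 ⟨h, by omega⟩), Or.inl ⟨rfl, Or.inr rfl⟩, by omega⟩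
  · refine ⟨(i - 1, j), hS _ _ _ hc ha (Prod.mk_le_mk.2 ⟨by omega, by omega⟩)
      (Prod.mk_le_mk.2 ⟨by omega, le_rfl⟩), Or.inr ⟨rfl, Or.inl (by omega)⟩, by omega⟩

theorem exists_chain_of_forall_exists_step {α : Type*} {S : Set α} {t : α} (f : α → ℤ)
    {r : α → α → Prop} (hbound : ∀ a ∈ S, f a ≤ f t) (hr : ∀ a b, r a b → f a < f b)
    (hstep : ∀ a ∈ S, a ≠ t → ∃ b ∈ S, r a b) {a : α} (ha : a ∈ S) :
    ∃ p : List α, p.head? = some a ∧ p.getLast? = some t ∧ (∀ x ∈ p, x ∈ S) ∧ p.IsChain r := by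
  induction hn : (f t - f a).toNat using Nat.strong_induction_on generalizing a with
  | _ n ih =>
    by_cases hat : a = t
    · subst hat
      exact ⟨[a], rfl, rfl, by simpa using ha, List.isChain_singleton a⟩
    obtain ⟨b, hb, hab⟩ := hstep a ha hat
    have hfab := hr a b hab
    have hbt := hbound b hb
    obtain ⟨_ | ⟨b', q⟩, hhead, hlast, hmem, hchain⟩ := ih _ (by omega) hb rfl
    · simp at hhead
    obtain rfl : b' = b := by simpa using hhead
    refine ⟨a :: b' :: q, rfl, by simpa using hlast, ?_, List.IsChain.cons_cons hab hchain⟩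
    simpa [ha] using hmem

theorem SkewConnected.exists_adj_diagVal_lt {S : Finset Cell} (hS : IsSkewDiagram S)
    (hconn : SkewConnected S) {a t : Cell} (ha : a ∈ S) (ht : t ∈ S)
    (htmax : ∀ c ∈ S, diagVal c ≤ diagVal t) (hat : a ≠ t) :
    ∃ b ∈ S, CellAdj a b ∧ diagVal a < diagVal b := by
  have hlt := hS.diagVal_lt_of_ne ha ht htmax hat
  obtain ⟨c, hc, hca⟩ := hconn.exists_diagVal_eq ha ht (lt_add_one _) hlt
  obtain ⟨b, hb, hab, hba⟩ := hS.exists_adj_diagVal_succ ha hc hca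
  exact ⟨b, hb, hab, by omega⟩

/-- in a connected skew diagram with unique highest-diagonal box `t`,
every box `a ≠ t` has an adjacent box on a strictly higher diagonal, and
consequently every such box is joined to `t` by a path of adjacent boxes with
strictly increasing diagonal values. -/
theorem step_and_path_to_highest_box
    (S : Finset Cell) (hS : IsSkewDiagram S) (hconn : SkewConnected S)
    (t : Cell) (htS : t ∈ S) (htmax : ∀ c ∈ S, diagVal c ≤ diagVal t)
    (a : Cell) (haS : a ∈ S) (hat : a ≠ t) :
    (∃ b ∈ S, CellAdj a b ∧ diagVal a < diagVal b) ∧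
    ∃ p : List Cell, p.head? = some a ∧ p.getLast? = some t ∧ (∀ x ∈ p, x ∈ S) ∧
      p.Chain' (fun u v => CellAdj u v ∧ diagVal u < diagVal v) :=
  ⟨hconn.exists_adj_diagVal_lt hS haS htS htmax hat,
    exists_chain_of_forall_exists_step diagVal htmax (fun _ _ h => h.2)
      (fun _ hu hut => hconn.exists_adj_diagVal_lt hS hu htS htmax hut) haS⟩
end

section
/- Let θ and θ′ be connected skew diagrams and φ : P(θ) → P(θ′) an isomorphism of posets. Then either θ = θ′ (as translation classes of skew diagrams) and φ is the identity, or θ^T = θ′ and φ is given by transposing θ. -/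
/-- The transpose of a cell. -/
def transposeCell (c : Cell) : Cell := (c.2, c.1)

/-! An interval `[x, y]` of a skew diagram is a full `(a + 1) × (b + 1)` grid of boxes. Its height
`a + b` and its size `(a + 1) * (b + 1)` are order invariants, so `φ y - φ x` is `y - x` or its
transpose. Cells on equal or adjacent diagonals are comparable, so `φ` preserves the rank `i + j`
along such pairs and moves the diagonal index `j - i` by steps `±1`; consecutive steps cannot
reverse, because incomparable cells two diagonals apart have equal rank. For connected `θ` the
occupied diagonals form an interval, so the rank shift and the sign of the steps are global, and
`φ` is a translation, possibly after transposing. -/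

open Finset

def rankVal (c : Cell) : ℤ := c.1 + c.2

@[simp] theorem diagVal_sub (a b : Cell) : diagVal (a - b) = diagVal a - diagVal b := by
  simp only [diagVal, Prod.fst_sub, Prod.snd_sub]; ring

@[simp] theorem rankVal_transposeCell (c : Cell) : rankVal (transposeCell c) = rankVal c :=
  add_comm _ _

@[simp] theorem diagVal_transposeCell (c : Cell) : diagVal (transposeCell c) = -diagVal c :=
  (neg_sub _ _).symm

theorem eq_of_rankVal_eq_of_diagVal_eq {a b : Cell} (hr : rankVal a = rankVal b)
    (hd : diagVal a = diagVal b) : a = b := by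
  simp only [rankVal, diagVal] at hr hd
  ext <;> omega

theorem eq_add_sub_of_rankVal_sub_eq_of_diagVal_sub_eq {a b a' b' : Cell}
    (hr : rankVal b - rankVal a = rankVal b' - rankVal a')
    (hd : diagVal b - diagVal a = diagVal b' - diagVal a') : b = b' + (a - a') := by
  simp only [rankVal, diagVal] at hr hd
  ext <;> simp only [Prod.fst_add, Prod.snd_add, Prod.fst_sub, Prod.snd_sub] <;> omega

theorem le_or_le_of_diagVal_le_add_one {a b : Cell} (hab : diagVal a ≤ diagVal b + 1)
    (hba : diagVal b ≤ diagVal a + 1) : a ≤ b ∨ b ≤ a := by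
  simp only [diagVal] at hab hba
  simp only [Prod.le_def]
  omega

theorem rankVal_eq_of_not_le_of_not_le {a b : Cell} (hd : diagVal b = diagVal a + 2)
    (hab : ¬a ≤ b) (hba : ¬b ≤ a) : rankVal a = rankVal b := by
  simp only [diagVal] at hd
  simp only [Prod.le_def, not_and_or, not_le] at hab hba
  simp only [rankVal]
  omega

theorem rankVal_add_one_of_covBy {a b : Cell} (h : a ⋖ b) : rankVal a + 1 = rankVal b := by
  rw [← Prod.mk.eta (p := a), ← Prod.mk.eta (p := b), Prod.mk_covBy_mk_iff,
    Order.covBy_iff_add_one_eq, Order.covBy_iff_add_one_eq] at h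
  simp only [rankVal]
  omega

theorem natCast_card_Icc_cell {a b : Cell} (h : a ≤ b) :
    (#(Icc a b) : ℤ) = (b.1 - a.1 + 1) * (b.2 - a.2 + 1) := by
  rw [card_Icc_prod, Int.card_Icc, Int.card_Icc, Nat.cast_mul,
    Int.toNat_of_nonneg (by linarith [h.1]), Int.toNat_of_nonneg (by linarith [h.2])]
  ring

theorem OrderIso.card_Icc {α β : Type*} [Preorder α] [Preorder β] [LocallyFiniteOrder α]
    [LocallyFiniteOrder β] (f : α ≃o β) (a b : α) : #(Icc (f a) (f b)) = #(Icc a b) := by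
  rw [← card_map f.toEquiv.toEmbedding]
  congr 1
  apply coe_injective
  simp [f.image_Icc]

theorem Finset.eq_image_of_equiv {α β : Type*} [DecidableEq β] {S : Finset α} {T : Finset β}
    (e : S ≃ T) {F : α → β} (he : ∀ s : S, (e s : β) = F s) : T = S.image F := by
  ext t
  refine ⟨fun ht => mem_image.2 ⟨_, (e.symm ⟨t, ht⟩).2, ?_⟩, fun ht => ?_⟩
  · simp [← he]
  · obtain ⟨s, hs, rfl⟩ := mem_image.1 ht
    exact he ⟨s, hs⟩ ▸ (e ⟨s, hs⟩).2

section

variable {S T : Finset Cell}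

theorem IsSkewDiagram.coe_covBy_coe (hS : IsSkewDiagram S) {x y : S} (h : x ⋖ y) :
    (x : Cell) ⋖ y := by
  refine (Set.OrdConnected.apply_covBy_apply_iff (OrderEmbedding.subtype _) ?_).2 h
  rw [OrderEmbedding.coe_subtype, Subtype.range_coe_subtype]
  exact ⟨fun a ha b hb c hc => hS a b c ha hb hc.1 hc.2⟩

theorem IsSkewDiagram.card_Icc_coe (hS : IsSkewDiagram S) (x y : S) :
    #(Icc (x : Cell) y) = #(Icc x y) := by
  rw [← map_subtype_embedding_Icc _ x y fun a b c hac hcb ha hb => hS a b c ha hb hac hcb,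
    card_map]

theorem rankVal_apply_sub_of_le (hS : IsSkewDiagram S) (hT : IsSkewDiagram T) (φ : S ≃o T)
    {x y : S} (hxy : x ≤ y) :
    rankVal (φ y) - rankVal (φ x) = rankVal y - rankVal x := by
  have hchain := le_iff_reflTransGen_covBy.1 hxy
  clear hxy
  induction hchain with
  | refl => simp
  | tail _ hcov ih =>
    have h := rankVal_add_one_of_covBy (hS.coe_covBy_coe hcov)
    have hφ := rankVal_add_one_of_covBy (hT.coe_covBy_coe ((apply_covBy_apply_iff φ).2 hcov))
    omega

theorem apply_sub_apply_eq_or_eq_transposeCell (hS : IsSkewDiagram S) (hT : IsSkewDiagram T)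
    (φ : S ≃o T) {x y : S} (hxy : x ≤ y) :
    (φ y : Cell) - φ x = (y : Cell) - x ∨ (φ y : Cell) - φ x = transposeCell ((y : Cell) - x) := by
  have hsum := rankVal_apply_sub_of_le hS hT φ hxy
  have hcard : (#(Icc (φ x : Cell) (φ y)) : ℤ) = #(Icc (x : Cell) y) := by
    rw [hS.card_Icc_coe, hT.card_Icc_coe, φ.card_Icc]
  rw [natCast_card_Icc_cell hxy, natCast_card_Icc_cell (φ.monotone hxy)] at hcard
  simp only [rankVal] at hsum
  have hroot : ((φ y : Cell).1 - (φ x : Cell).1 - ((y : Cell).1 - (x : Cell).1)) *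
      ((φ y : Cell).1 - (φ x : Cell).1 - ((y : Cell).2 - (x : Cell).2)) = 0 := by
    linear_combination ((φ y : Cell).1 - (φ x : Cell).1 + 1) * hsum - hcard
  rcases mul_eq_zero.1 hroot with h | h
  · left; ext <;> simp only [Prod.fst_sub, Prod.snd_sub] <;> omega
  · right; ext <;> simp only [transposeCell, Prod.fst_sub, Prod.snd_sub] <;> omega

theorem rankVal_apply_sub_of_comparable (hS : IsSkewDiagram S) (hT : IsSkewDiagram T)
    (φ : S ≃o T) {x y : S} (hxy : x ≤ y ∨ y ≤ x) :
    rankVal (φ y) - rankVal (φ x) = rankVal y - rankVal x := by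
  rcases hxy with h | h
  · exact rankVal_apply_sub_of_le hS hT φ h
  · linarith [rankVal_apply_sub_of_le hS hT φ h]

theorem diagVal_apply_sub_eq_or_eq_neg (hS : IsSkewDiagram S) (hT : IsSkewDiagram T)
    (φ : S ≃o T) {x y : S} (hxy : x ≤ y ∨ y ≤ x) :
    diagVal (φ y) - diagVal (φ x) = diagVal y - diagVal x ∨
      diagVal (φ y) - diagVal (φ x) = -(diagVal y - diagVal x) := by
  have key {x y : S} (h : x ≤ y) : diagVal (φ y) - diagVal (φ x) = diagVal y - diagVal x ∨
      diagVal (φ y) - diagVal (φ x) = -(diagVal y - diagVal x) :=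
    (apply_sub_apply_eq_or_eq_transposeCell hS hT φ h).imp
      (fun e => by simpa using congrArg diagVal e) (fun e => by simpa using congrArg diagVal e)
  rcases hxy with h | h
  · exact key h
  · rcases key h with e | e <;> [left; right] <;> linarith

theorem SkewConnected.exists_diagVal_eq_s3 (hc : SkewConnected S) {x y : S} {k : ℤ}
    (hx : diagVal x ≤ k) (hy : k ≤ diagVal y) : ∃ z : S, diagVal z = k := by
  by_contra! h
  exact hc ⟨k, fun c hc => h ⟨c, hc⟩, ⟨x, x.2, hx.lt_of_ne (h x)⟩, ⟨y, y.2, hy.lt_of_ne' (h y)⟩⟩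

theorem SkewConnected.induction_on_diagVal (hc : SkewConnected S) {P : S → Prop} (x₀ : S)
    (base : ∀ x : S, diagVal x = diagVal x₀ → P x)
    (step : ∀ z x : S, diagVal x₀ ≤ diagVal z → diagVal x = diagVal z + 1 → P z → P x)
    (x : S) (hx : diagVal x₀ ≤ diagVal x) : P x := by
  suffices ∀ k, diagVal x₀ ≤ k → ∀ x : S, diagVal x = k → P x from this _ hx x rfl
  intro k hk
  induction k, hk using Int.leInduction with
  | base => exact base
  | succ k hk ih =>
    intro x hx
    obtain ⟨z, hz⟩ := hc.exists_diagVal_eq_s3 (x := x₀) (y := x) hk (by omega)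
    exact step z x (hz ▸ hk) (by omega) (ih z hz)

theorem SkewConnected.apply_eq_apply {β : Type*} (hc : SkewConnected S) {f : S → β}
    (hf : ∀ x y : S, diagVal x ≤ diagVal y → diagVal y ≤ diagVal x + 1 → f x = f y)
    (x y : S) : f x = f y := by
  wlog hxy : diagVal x ≤ diagVal y generalizing x y
  · exact (this y x (by omega)).symm
  exact hc.induction_on_diagVal (P := fun y => f x = f y) x
    (fun y hy => hf x y hy.ge (by omega)) (fun z y _ hzy hz => hz.trans (hf z y (by omega) hzy.le))
    y hxy

theorem rankVal_apply_sub_rankVal_eq (hS : IsSkewDiagram S) (hT : IsSkewDiagram T)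
    (hc : SkewConnected S) (φ : S ≃o T) (x y : S) :
    rankVal (φ x) - rankVal x = rankVal (φ y) - rankVal y := by
  refine hc.apply_eq_apply (f := fun s => rankVal (φ s) - rankVal s) (fun x y hxy hyx => ?_) x y
  have := rankVal_apply_sub_of_comparable hS hT φ
    (le_or_le_of_diagVal_le_add_one (a := x) (b := y) (by omega) hyx)
  linarith

theorem diagVal_apply_eq_of_diagVal_eq (hS : IsSkewDiagram S) (hT : IsSkewDiagram T)
    (φ : S ≃o T) {x y : S} (h : diagVal x = diagVal y) : diagVal (φ x) = diagVal (φ y) := by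
  have := diagVal_apply_sub_eq_or_eq_neg hS hT φ
    (le_or_le_of_diagVal_le_add_one (a := x) (b := y) (by omega) (by omega))
  omega

theorem diagVal_apply_sub_eq_of_consecutive (hS : IsSkewDiagram S) (hT : IsSkewDiagram T)
    (hc : SkewConnected S) (φ : S ≃o T) {x y z : S} (hxy : diagVal y = diagVal x + 1)
    (hyz : diagVal z = diagVal y + 1) :
    diagVal (φ z) - diagVal (φ y) = diagVal (φ y) - diagVal (φ x) := by
  have h₁ := diagVal_apply_sub_eq_or_eq_neg hS hT φ
    (le_or_le_of_diagVal_le_add_one (a := x) (b := y) (by omega) (by omega))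
  have h₂ := diagVal_apply_sub_eq_or_eq_neg hS hT φ
    (le_or_le_of_diagVal_le_add_one (a := y) (b := z) (by omega) (by omega))
  suffices diagVal (φ x) ≠ diagVal (φ z) by omega
  intro heq
  by_cases hxz : (x : Cell) ≤ z ∨ (z : Cell) ≤ x
  · have := diagVal_apply_sub_eq_or_eq_neg hS hT φ hxz
    omega
  · -- incomparable cells two diagonals apart have the same rank, hence so do their images
    have hr := rankVal_eq_of_not_le_of_not_le (a := x) (b := z) (by omega)
      (fun h => hxz (Or.inl h)) (fun h => hxz (Or.inr h))
    have hshift := rankVal_apply_sub_rankVal_eq hS hT hc φ x z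
    have : x = z := φ.injective (Subtype.ext (eq_of_rankVal_eq_of_diagVal_eq (by omega) heq))
    subst this
    omega

theorem diagVal_apply_sub_eq_of_adjacent (hS : IsSkewDiagram S) (hT : IsSkewDiagram T)
    (hc : SkewConnected S) (φ : S ≃o T) {u v x y : S} (huv : diagVal v = diagVal u + 1)
    (hxy : diagVal y = diagVal x + 1) :
    diagVal (φ y) - diagVal (φ x) = diagVal (φ v) - diagVal (φ u) := by
  wlog hux : diagVal u ≤ diagVal x generalizing u v x y
  · exact (this hxy huv (by omega)).symm
  refine hc.induction_on_diagVal (P := fun x => ∀ y : S, diagVal y = diagVal x + 1 →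
    diagVal (φ y) - diagVal (φ x) = diagVal (φ v) - diagVal (φ u)) u ?_ ?_ x hux y hxy
  · intro x hx y hxy
    have hx' := diagVal_apply_eq_of_diagVal_eq hS hT φ hx
    have hy' := diagVal_apply_eq_of_diagVal_eq hS hT φ (x := y) (y := v) (by omega)
    omega
  · intro z x _ hzx ih y hxy
    rw [diagVal_apply_sub_eq_of_consecutive hS hT hc φ hzx hxy]
    exact ih x hzx

theorem exists_diagVal_apply_sub_mul_eq (hS : IsSkewDiagram S) (hT : IsSkewDiagram T)
    (hc : SkewConnected S) (φ : S ≃o T) :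
    ∃ σ : ℤ, (σ = 1 ∨ σ = -1) ∧
      ∀ x y : S, diagVal (φ x) - σ * diagVal x = diagVal (φ y) - σ * diagVal y := by
  by_cases hadj : ∃ u v : S, diagVal v = diagVal u + 1
  · obtain ⟨u, v, huv⟩ := hadj
    have hσ := diagVal_apply_sub_eq_or_eq_neg hS hT φ
      (le_or_le_of_diagVal_le_add_one (a := u) (b := v) (by omega) (by omega))
    refine ⟨diagVal (φ v) - diagVal (φ u), by omega, fun x y => hc.apply_eq_apply
      (f := fun s => diagVal (φ s) - (diagVal (φ v) - diagVal (φ u)) * diagVal s)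
      (fun x y hxy hyx => ?_) x y⟩
    rcases hxy.eq_or_lt with hxy | hxy
    · simp only [hxy, diagVal_apply_eq_of_diagVal_eq hS hT φ hxy]
    · have hstep : diagVal y = diagVal x + 1 := by omega
      have := diagVal_apply_sub_eq_of_adjacent hS hT hc φ huv hstep
      linear_combination (diagVal (φ v) - diagVal (φ u)) * hstep - this
  · push Not at hadj
    refine ⟨1, Or.inl rfl, fun x y => hc.apply_eq_apply
      (f := fun s => diagVal (φ s) - 1 * diagVal s) (fun x y hxy hyx => ?_) x y⟩
    have hxy' : diagVal x = diagVal y := by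
      have := hadj x y
      omega
    simp only [hxy', diagVal_apply_eq_of_diagVal_eq hS hT φ hxy']

end

theorem orderIso_rigidity_general
    (S T : Finset Cell) (hS : IsSkewDiagram S) (hT : IsSkewDiagram T)
    (hcS : SkewConnected S)
    (φ : {c : Cell // c ∈ S} ≃o {c : Cell // c ∈ T}) :
    (∃ v : Cell, T = S.image (· + v) ∧
      ∀ s : {c : Cell // c ∈ S}, (φ s : Cell) = (s : Cell) + v) ∨
    (∃ v : Cell, T = (S.image transposeCell).image (· + v) ∧
      ∀ s : {c : Cell // c ∈ S}, (φ s : Cell) = transposeCell (s : Cell) + v) := by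
  rcases isEmpty_or_nonempty S with hS₀ | ⟨⟨s₀⟩⟩
  · exact Or.inl ⟨0, eq_image_of_equiv φ.toEquiv isEmptyElim, isEmptyElim⟩
  have hrank := rankVal_apply_sub_rankVal_eq hS hT hcS φ s₀
  obtain ⟨σ, rfl | rfl, hdiag⟩ := exists_diagVal_apply_sub_mul_eq hS hT hcS φ
  · have hφ (s : S) : (φ s : Cell) = s + (φ s₀ - s₀) :=
      eq_add_sub_of_rankVal_sub_eq_of_diagVal_sub_eq (by linarith [hrank s])
        (by linarith [hdiag s₀ s])
    exact Or.inl ⟨_, eq_image_of_equiv φ.toEquiv hφ, hφ⟩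
  · have hφ (s : S) : (φ s : Cell) = transposeCell s + (φ s₀ - transposeCell s₀) :=
      eq_add_sub_of_rankVal_sub_eq_of_diagVal_sub_eq
        (by simp only [rankVal_transposeCell]; linarith [hrank s])
        (by simp only [diagVal_transposeCell]; linarith [hdiag s₀ s])
    refine Or.inr ⟨_, ?_, hφ⟩
    rw [image_image]
    exact eq_image_of_equiv φ.toEquiv hφ

/-- an isomorphism of box posets of connected skew diagrams is either
the identity (a translation, since skew diagrams are taken up to translation),
with `θ = θ′` up to translation, or is given by transposing, with `θ^T = θ′` up to
translation.  Here the poset `P(θ)` generated by the covering relations coincides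
with the componentwise order carried by the subtype of cells. -/
theorem orderIso_rigidity
    (S T : Finset Cell) (hS : IsSkewDiagram S) (hT : IsSkewDiagram T)
    (hcS : SkewConnected S) (hcT : SkewConnected T)
    (φ : {c : Cell // c ∈ S} ≃o {c : Cell // c ∈ T}) :
    (∃ v : Cell, T = S.image (· + v) ∧
      ∀ s : {c : Cell // c ∈ S}, (φ s : Cell) = (s : Cell) + v) ∨
    (∃ v : Cell, T = (S.image transposeCell).image (· + v) ∧
      ∀ s : {c : Cell // c ∈ S}, (φ s : Cell) = transposeCell (s : Cell) + v) :=
  orderIso_rigidity_general S T hS hT hcS φ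
end

section
/- For Young diagrams λ and λ′ (viewed as skew diagrams with λ nonempty), P(λ) ≅ P(λ′) as posets if and only if λ = λ′ or λ^T = λ′. Moreover, P(λ)^op ≅ P(λ′) is possible only when λ is a rectangle (in which case λ′ is the same rectangle or its transpose). -/
/-- The conjugate (transpose) of a partition `f : ℕ → ℕ` (0-indexed rows):
`(conjP f) j` is the number of rows `i` with `f i > j`, i.e. the length of
column `j`. -/
noncomputable def conjP (f : ℕ → ℕ) : ℕ → ℕ := fun j => Set.ncard {i : ℕ | j < f i}

/-- The rectangle partition `(a^b)`. -/
def rectP (a b : ℕ) : ℕ → ℕ := fun i => if i < b then a else 0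

/-- The type of boxes of the Young diagram of `f`, with the componentwise order:
this is the poset `P(f)` generated by the covering relations
`(i,j) < (i,j+1)` and `(i,j) < (i+1,j)`. -/
abbrev YPoset (f : ℕ → ℕ) : Type := {p : ℕ × ℕ // p.2 < f p.1}

namespace YAux

lemma ncard_Iic (n : ℕ) : (Set.Iic n).ncard = n + 1 := by
  rw [← Finset.coe_Iic, Set.ncard_coe_finset, Nat.card_Iic]

lemma ncard_Iio (n : ℕ) : (Set.Iio n).ncard = n := by
  rw [← Finset.coe_Iio, Set.ncard_coe_finset, Nat.card_Iio]

lemma natCard_Iic (n : ℕ) : Nat.card (Set.Iic n) = n + 1 := by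
  rw [Nat.card_coe_set_eq, ncard_Iic]

lemma natCard_Iio (n : ℕ) : Nat.card (Set.Iio n) = n := by
  rw [Nat.card_coe_set_eq, ncard_Iio]

lemma nat_eq_of_lt_iff {a b : ℕ} (h : ∀ k, k < a ↔ k < b) : a = b := by
  rcases lt_trichotomy a b with h' | h' | h'
  · exact absurd ((h a).2 h') (lt_irrefl a)
  · exact h'
  · exact absurd ((h b).1 h') (lt_irrefl b)

lemma mem_of_le {f : ℕ → ℕ} (hf : Antitone f) {p q : ℕ × ℕ} (hq : q ≤ p)
    (hp : p.2 < f p.1) : q.2 < f q.1 :=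
  lt_of_le_of_lt hq.2 (lt_of_lt_of_le hp (hf hq.1))

lemma ple {f : ℕ → ℕ} {a b : YPoset f} :
    a ≤ b ↔ a.val.1 ≤ b.val.1 ∧ a.val.2 ≤ b.val.2 :=
  Iff.trans Subtype.coe_le_coe.symm Prod.le_def

/-- finite lower sets of ℕ are initial segments -/
lemma lowerSet_eq_Iio (S : Set ℕ) (hfin : S.Finite)
    (hls : ∀ a b : ℕ, a ≤ b → b ∈ S → a ∈ S) : S = Set.Iio S.ncard := by
  ext k
  simp only [Set.mem_Iio]
  constructor
  · intro hk
    have hsub : Set.Iic k ⊆ S := fun a ha => hls a k ha hk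
    have h := Set.ncard_le_ncard hsub hfin
    rw [ncard_Iic] at h
    omega
  · intro hk
    by_contra hks
    have hsub : S ⊆ Set.Iio k := by
      intro m hm
      by_contra h'
      rw [Set.mem_Iio, not_lt] at h'
      exact hks (hls k m h' hm)
    have h := Set.ncard_le_ncard hsub (Set.finite_Iio k)
    rw [ncard_Iio] at h
    omega

lemma conjP_lt_iff {f : ℕ → ℕ} (hf : Antitone f) (hffin : {i | f i ≠ 0}.Finite)
    (i j : ℕ) : j < conjP f i ↔ i < f j := by
  have hfin : {k | i < f k}.Finite :=
    hffin.subset (fun k hk => by simp only [Set.mem_setOf_eq] at *; omega)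
  have hls := lowerSet_eq_Iio {k | i < f k} hfin
    (fun a b hab hb => lt_of_lt_of_le hb (hf hab))
  constructor
  · intro h
    have : j ∈ Set.Iio (Set.ncard {k | i < f k}) := h
    rw [← hls] at this
    exact this
  · intro h
    have : j ∈ {k | i < f k} := h
    rw [hls] at this
    exact this

lemma conjP_antitone {f : ℕ → ℕ} (hf : Antitone f) (hffin : {i | f i ≠ 0}.Finite) :
    Antitone (conjP f) := by
  intro i i' h
  by_contra hc
  push_neg at hc
  have h1 := (conjP_lt_iff hf hffin i' (conjP f i)).1 hc
  have h2 : i < f (conjP f i) := lt_of_le_of_lt h h1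
  exact lt_irrefl _ ((conjP_lt_iff hf hffin i (conjP f i)).2 h2)

/-- equal diagrams give equal partitions -/
lemma eq_of_mem_iff {f g : ℕ → ℕ} (h : ∀ p : ℕ × ℕ, p.2 < f p.1 ↔ p.2 < g p.1) :
    f = g :=
  funext fun i => nat_eq_of_lt_iff fun k => h (i, k)

/-! ### cardinality computations -/

lemma card_le_pair (c : ℕ × ℕ) :
    Nat.card {p : ℕ × ℕ // p ≤ c} = (c.1 + 1) * (c.2 + 1) := by
  have e : {p : ℕ × ℕ // p ≤ c} ≃ Set.Iic c.1 × Set.Iic c.2 :=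
    { toFun := fun p => (⟨p.val.1, p.2.1⟩, ⟨p.val.2, p.2.2⟩)
      invFun := fun q => ⟨(q.1.val, q.2.val), ⟨q.1.2, q.2.2⟩⟩
      left_inv := fun p => rfl
      right_inv := fun q => rfl }
  rw [Nat.card_congr e, Nat.card_prod, natCard_Iic, natCard_Iic]

lemma card_downset {f : ℕ → ℕ} (hf : Antitone f) (x : YPoset f) :
    Nat.card {y : YPoset f // y ≤ x} = (x.val.1 + 1) * (x.val.2 + 1) := by
  rw [← card_le_pair x.val]
  exact Nat.card_congr
    { toFun := fun y => ⟨y.val.val, y.2⟩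
      invFun := fun p => ⟨⟨p.val, mem_of_le hf p.2 x.2⟩, p.2⟩
      left_inv := fun y => rfl
      right_inv := fun p => rfl }

def veeEquiv (c : ℕ × ℕ) :
    {p : ℕ × ℕ // p ≤ c ∧ (p.1 = 0 ∨ p.2 = 0)} ≃ Set.Iic (c.1 + c.2) where
  toFun p := ⟨if p.val.2 = 0 then p.val.1 else c.1 + p.val.2, by
    obtain ⟨h12, h3⟩ := p.2
    obtain ⟨h1, h2⟩ := Prod.le_def.mp h12
    simp only [Set.mem_Iic]
    split_ifs <;> omega⟩
  invFun k := ⟨if k.val ≤ c.1 then (k.val, 0) else (0, k.val - c.1), by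
    have hk : k.val ≤ c.1 + c.2 := k.2
    split_ifs with h
    · exact ⟨Prod.le_def.mpr ⟨h, Nat.zero_le _⟩, Or.inr rfl⟩
    · exact ⟨Prod.le_def.mpr ⟨Nat.zero_le _, by omega⟩, Or.inl rfl⟩⟩
  left_inv p := by
    obtain ⟨h12, h3⟩ := p.2
    obtain ⟨h1, h2⟩ := Prod.le_def.mp h12
    apply Subtype.ext
    dsimp only
    split_ifs with hA hB hB <;>
      (apply Prod.ext) <;> simp_all <;> omega
  right_inv k := by
    have hk : k.val ≤ c.1 + c.2 := k.2
    apply Subtype.ext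
    dsimp only
    split_ifs with hA hB hB <;> simp_all <;> omega

lemma card_vee (c : ℕ × ℕ) :
    Nat.card {p : ℕ × ℕ // p ≤ c ∧ (p.1 = 0 ∨ p.2 = 0)} = c.1 + c.2 + 1 := by
  rw [Nat.card_congr (veeEquiv c), natCard_Iic]

/-- downward chain condition -/
def DChain {f : ℕ → ℕ} (y : YPoset f) : Prop :=
  ∀ a b : YPoset f, a ≤ y → b ≤ y → a ≤ b ∨ b ≤ a

lemma dchain_iff {f : ℕ → ℕ} (hf : Antitone f) (y : YPoset f) :
    DChain y ↔ (y.val.1 = 0 ∨ y.val.2 = 0) := by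
  constructor
  · intro h
    by_contra hc
    push_neg at hc
    obtain ⟨h1, h2⟩ := hc
    have hy1 : 1 ≤ y.val.1 := Nat.one_le_iff_ne_zero.mpr h1
    have hy2 : 1 ≤ y.val.2 := Nat.one_le_iff_ne_zero.mpr h2
    have ha : ((1, 0) : ℕ × ℕ).2 < f 1 :=
      mem_of_le hf (Prod.le_def.mpr ⟨hy1, Nat.zero_le _⟩) y.2
    have hb : ((0, 1) : ℕ × ℕ).2 < f 0 :=
      mem_of_le hf (Prod.le_def.mpr ⟨Nat.zero_le _, hy2⟩) y.2
    have := h ⟨(1, 0), ha⟩ ⟨(0, 1), hb⟩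
      (ple.mpr ⟨hy1, Nat.zero_le _⟩) (ple.mpr ⟨Nat.zero_le _, hy2⟩)
    rcases this with h' | h'
    · exact Nat.not_succ_le_zero 0 (ple.mp h').1
    · exact Nat.not_succ_le_zero 0 (ple.mp h').2
  · intro h a b ha hb
    have ha' := ple.mp ha
    have hb' := ple.mp hb
    rcases h with h | h
    · rcases le_total a.val.2 b.val.2 with h' | h'
      · exact Or.inl (ple.mpr ⟨by omega, h'⟩)
      · exact Or.inr (ple.mpr ⟨by omega, h'⟩)
    · rcases le_total a.val.1 b.val.1 with h' | h'
      · exact Or.inl (ple.mpr ⟨h', by omega⟩)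
      · exact Or.inr (ple.mpr ⟨h', by omega⟩)

lemma card_chain_downset {f : ℕ → ℕ} (hf : Antitone f) (x : YPoset f) :
    Nat.card {y : YPoset f // y ≤ x ∧ DChain y} = x.val.1 + x.val.2 + 1 := by
  rw [← card_vee x.val]
  exact Nat.card_congr
    { toFun := fun y => ⟨y.val.val, y.2.1, (dchain_iff hf _).1 y.2.2⟩
      invFun := fun p => ⟨⟨p.val, mem_of_le hf p.2.1 x.2⟩, p.2.1,
        (dchain_iff hf _).2 p.2.2⟩
      left_inv := fun y => rfl
      right_inv := fun p => rfl }

/-! ### transport along order isos -/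

lemma dchain_map {f g : ℕ → ℕ} (φ : YPoset f ≃o YPoset g) (y : YPoset f) :
    DChain (φ y) ↔ DChain y := by
  constructor
  · intro h a b ha hb
    rcases h (φ a) (φ b) (φ.le_iff_le.2 ha) (φ.le_iff_le.2 hb) with h' | h'
    · exact Or.inl (φ.le_iff_le.1 h')
    · exact Or.inr (φ.le_iff_le.1 h')
  · intro h a b ha hb
    have ha' : φ.symm a ≤ y := by
      have := φ.symm.le_iff_le.2 ha
      rwa [φ.symm_apply_apply] at this
    have hb' : φ.symm b ≤ y := by
      have := φ.symm.le_iff_le.2 hb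
      rwa [φ.symm_apply_apply] at this
    rcases h (φ.symm a) (φ.symm b) ha' hb' with h' | h'
    · exact Or.inl (φ.symm.le_iff_le.1 h')
    · exact Or.inr (φ.symm.le_iff_le.1 h')

def downsetEquiv {f g : ℕ → ℕ} (φ : YPoset f ≃o YPoset g) (x : YPoset f) :
    {y : YPoset f // y ≤ x} ≃ {z : YPoset g // z ≤ φ x} where
  toFun y := ⟨φ y.val, φ.le_iff_le.2 y.2⟩
  invFun z := ⟨φ.symm z.val, by
    have := φ.symm.le_iff_le.2 z.2
    rwa [φ.symm_apply_apply] at this⟩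
  left_inv y := Subtype.ext (φ.symm_apply_apply y.val)
  right_inv z := Subtype.ext (φ.apply_symm_apply z.val)

def chainDownsetEquiv {f g : ℕ → ℕ} (φ : YPoset f ≃o YPoset g) (x : YPoset f) :
    {y : YPoset f // y ≤ x ∧ DChain y} ≃ {z : YPoset g // z ≤ φ x ∧ DChain z} where
  toFun y := ⟨φ y.val, φ.le_iff_le.2 y.2.1, (dchain_map φ y.val).2 y.2.2⟩
  invFun z := ⟨φ.symm z.val, by
    constructor
    · have := φ.symm.le_iff_le.2 z.2.1
      rwa [φ.symm_apply_apply] at this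
    · have := (dchain_map φ (φ.symm z.val)).1
      rw [φ.apply_symm_apply] at this
      exact this z.2.2⟩
  left_inv y := Subtype.ext (φ.symm_apply_apply y.val)
  right_inv z := Subtype.ext (φ.apply_symm_apply z.val)

lemma sum_prod_eq {a b c d : ℕ} (hs : a + b = c + d)
    (hp : (a + 1) * (b + 1) = (c + 1) * (d + 1)) :
    (a = c ∧ b = d) ∨ (a = d ∧ b = c) := by
  have hp' : a * b = c * d := by nlinarith
  have hs' : (a : ℤ) + b = c + d := by exact_mod_cast hs
  have hp'' : (a : ℤ) * b = c * d := by exact_mod_cast hp'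
  have key : ((a : ℤ) - b - ((c : ℤ) - d)) * ((a : ℤ) - b + ((c : ℤ) - d)) = 0 := by
    linear_combination (a + b + c + d : ℤ) * hs' - 4 * hp''
  rcases mul_eq_zero.mp key with h | h <;> omega

/-- the coordinate lemma -/
lemma coord {f g : ℕ → ℕ} (hf : Antitone f) (hg : Antitone g)
    (φ : YPoset f ≃o YPoset g) (x : YPoset f) :
    (φ x).val = x.val ∨ (φ x).val = x.val.swap := by
  have h1 : ((φ x).val.1 + 1) * ((φ x).val.2 + 1) = (x.val.1 + 1) * (x.val.2 + 1) := by
    rw [← card_downset hg (φ x), ← card_downset hf x]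
    exact Nat.card_congr (downsetEquiv φ x).symm
  have h2 : (φ x).val.1 + (φ x).val.2 = x.val.1 + x.val.2 := by
    have hA := card_chain_downset hf x
    have hB := card_chain_downset hg (φ x)
    have hC : Nat.card {y : YPoset f // y ≤ x ∧ DChain y} =
        Nat.card {z : YPoset g // z ≤ φ x ∧ DChain z} :=
      Nat.card_congr (chainDownsetEquiv φ x)
    omega
  rcases sum_prod_eq h2 h1 with ⟨hA, hB⟩ | ⟨hA, hB⟩
  · exact Or.inl (Prod.ext hA hB)
  · exact Or.inr (Prod.ext hA hB)

end YAux

namespace YAux2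
open YAux

/-- rigidity: an order iso fixing (1,0) is the identity on coordinates -/
lemma rigid (f g : ℕ → ℕ) (hf : Antitone f) (hg : Antitone g)
    (h10 : (0:ℕ) < f 1) (h01 : (1:ℕ) < f 0)
    (φ : YPoset f ≃o YPoset g) (hφ : (φ ⟨(1, 0), h10⟩).val = (1, 0)) : f = g := by
  have h01' : (φ ⟨(0, 1), h01⟩).val = (0, 1) := by
    rcases coord hf hg φ ⟨(0, 1), h01⟩ with h | h
    · exact h
    · exfalso
      have : φ ⟨(0, 1), h01⟩ = φ ⟨(1, 0), h10⟩ := Subtype.ext (by rw [h, hφ]; rfl)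
      have := φ.injective this
      have := congrArg (fun z => (Subtype.val z).1) this
      simp at this
  have key : ∀ x : YPoset f, (φ x).val = x.val := by
    intro x
    -- column boxes
    have hcol : ∀ (i : ℕ) (hi : (0:ℕ) < f i), (φ ⟨(i, 0), hi⟩).val = (i, 0) := by
      intro i hi
      rcases coord hf hg φ ⟨(i, 0), hi⟩ with h | h
      · exact h
      · -- swap case : value is (0, i)
        rcases Nat.eq_zero_or_pos i with hz | hpos
        · subst hz; exact h
        · have hle : (⟨(1, 0), h10⟩ : YPoset f) ≤ ⟨(i, 0), hi⟩ :=
            ple.mpr ⟨hpos, Nat.zero_le _⟩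
          have := (ple.mp (φ.le_iff_le.mpr hle)).1
          rw [hφ, h] at this
          exact absurd this (by simp)
    have hrow : ∀ (j : ℕ) (hj : j < f 0), (φ ⟨(0, j), hj⟩).val = (0, j) := by
      intro j hj
      rcases coord hf hg φ ⟨(0, j), hj⟩ with h | h
      · exact h
      · rcases Nat.eq_zero_or_pos j with hz | hpos
        · subst hz; exact h
        · have hle : (⟨(0, 1), h01⟩ : YPoset f) ≤ ⟨(0, j), hj⟩ :=
            ple.mpr ⟨Nat.zero_le _, hpos⟩
          have := (ple.mp (φ.le_iff_le.mpr hle)).2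
          rw [h01', h] at this
          exact absurd this (by simp)
    -- general box
    have hxi : (0:ℕ) < f x.val.1 := lt_of_le_of_lt (Nat.zero_le _) x.2
    have hxj : x.val.2 < f 0 := lt_of_lt_of_le x.2 (hf (Nat.zero_le _))
    have hlecol : (⟨(x.val.1, 0), hxi⟩ : YPoset f) ≤ x := ple.mpr ⟨le_refl _, Nat.zero_le _⟩
    have hlerow : (⟨(0, x.val.2), hxj⟩ : YPoset f) ≤ x := ple.mpr ⟨Nat.zero_le _, le_refl _⟩
    have hc := (ple.mp (φ.le_iff_le.mpr hlecol)).1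
    have hr := (ple.mp (φ.le_iff_le.mpr hlerow)).2
    rw [hcol _ hxi] at hc
    rw [hrow _ hxj] at hr
    -- hc : x.val.1 ≤ (φ x).val.1, hr : x.val.2 ≤ (φ x).val.2
    rcases coord hf hg φ x with h | h
    · exact h
    · have e1 : (φ x).val.1 = x.val.2 := by rw [h]; rfl
      have e2 : (φ x).val.2 = x.val.1 := by rw [h]; rfl
      have : x.val.1 = x.val.2 := by omega
      rw [h, Prod.swap, ← this]
      exact Prod.ext rfl (by rw [this])
  apply eq_of_mem_iff
  intro p
  constructor
  · intro h
    have h2 := (φ ⟨p, h⟩).2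
    rwa [key ⟨p, h⟩] at h2
  · intro h
    have h2 := (φ.symm ⟨p, h⟩).2
    have h3 := key (φ.symm ⟨p, h⟩)
    rw [φ.apply_symm_apply] at h3
    have h3' : p = (φ.symm ⟨p, h⟩).val := h3
    rw [h3']
    exact h2

end YAux2

namespace YAux3
open YAux YAux2

noncomputable def swapIso (f : ℕ → ℕ) (hf : Antitone f) (hffin : {i | f i ≠ 0}.Finite) :
    YPoset f ≃o YPoset (conjP f) where
  toFun x := ⟨x.val.swap, (conjP_lt_iff hf hffin x.val.2 x.val.1).2 x.2⟩
  invFun z := ⟨z.val.swap, (conjP_lt_iff hf hffin z.val.1 z.val.2).1 z.2⟩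
  left_inv x := Subtype.ext (Prod.swap_swap _)
  right_inv z := Subtype.ext (Prod.swap_swap _)
  map_rel_iff' := by
    intro a b
    exact Iff.trans (Iff.trans Subtype.coe_le_coe.symm Prod.swap_le_swap)
      Subtype.coe_le_coe

lemma card_row {f : ℕ → ℕ} (hf : Antitone f) (h1 : f 1 = 0) :
    Nat.card (YPoset f) = f 0 := by
  have hfst : ∀ p : YPoset f, p.val.1 = 0 := by
    intro p
    by_contra h
    have : f p.val.1 ≤ f 1 := hf (Nat.one_le_iff_ne_zero.mpr h)
    have := p.2
    omega
  rw [← natCard_Iio (f 0)]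
  exact Nat.card_congr
    { toFun := fun p => ⟨p.val.2, lt_of_lt_of_le p.2 (hf (Nat.zero_le _))⟩
      invFun := fun j => ⟨(0, j.val), j.2⟩
      left_inv := fun p => Subtype.ext (Prod.ext (hfst p).symm rfl)
      right_inv := fun j => rfl }

lemma card_col {f : ℕ → ℕ} (hf : Antitone f) (h0 : f 0 ≤ 1) :
    Nat.card (YPoset f) = conjP f 0 := by
  have hsnd : ∀ p : YPoset f, p.val.2 = 0 := by
    intro p
    have h := p.2
    have : f p.val.1 ≤ f 0 := hf (Nat.zero_le _)
    omega
  have : conjP f 0 = Set.ncard {i : ℕ | 0 < f i} := rfl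
  rw [this, ← Nat.card_coe_set_eq]
  exact Nat.card_congr
    { toFun := fun p => ⟨p.val.1, lt_of_le_of_lt (Nat.zero_le _) p.2⟩
      invFun := fun i => ⟨(i.val, 0), i.2⟩
      left_inv := fun p => Subtype.ext (Prod.ext rfl (hsnd p).symm)
      right_inv := fun i => rfl }

lemma total_of_chain {f : ℕ → ℕ} (hf : Antitone f) (hch : f 1 = 0 ∨ f 0 ≤ 1) :
    ∀ x y : YPoset f, x ≤ y ∨ y ≤ x := by
  intro x y
  rcases hch with h | h
  · have hx : x.val.1 = 0 := by
      by_contra hc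
      have : f x.val.1 ≤ f 1 := hf (Nat.one_le_iff_ne_zero.mpr hc)
      have := x.2; omega
    have hy : y.val.1 = 0 := by
      by_contra hc
      have : f y.val.1 ≤ f 1 := hf (Nat.one_le_iff_ne_zero.mpr hc)
      have := y.2; omega
    rcases le_total x.val.2 y.val.2 with h' | h'
    · exact Or.inl (ple.mpr ⟨by omega, h'⟩)
    · exact Or.inr (ple.mpr ⟨by omega, h'⟩)
  · have hx : x.val.2 = 0 := by
      have : f x.val.1 ≤ f 0 := hf (Nat.zero_le _)
      have := x.2; omega
    have hy : y.val.2 = 0 := by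
      have : f y.val.1 ≤ f 0 := hf (Nat.zero_le _)
      have := y.2; omega
    rcases le_total x.val.1 y.val.1 with h' | h'
    · exact Or.inl (ple.mpr ⟨h', by omega⟩)
    · exact Or.inr (ple.mpr ⟨h', by omega⟩)

/-- the forward direction of the main statement -/
lemma forward (f g : ℕ → ℕ) (hf : Antitone f) (hg : Antitone g)
    (hffin : {i | f i ≠ 0}.Finite) (hgfin : {i | g i ≠ 0}.Finite)
    (hne : f 0 ≠ 0) (φ : YPoset f ≃o YPoset g) : f = g ∨ conjP f = g := by
  have hcard : Nat.card (YPoset f) = Nat.card (YPoset g) := Nat.card_congr φ.toEquiv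
  by_cases hch : f 1 = 0 ∨ f 0 ≤ 1
  · -- chain case
    have hgch : g 1 = 0 ∨ g 0 ≤ 1 := by
      by_contra hc
      push_neg at hc
      obtain ⟨hg1, hg0⟩ := hc
      have hu : ((1, 0) : ℕ × ℕ).2 < g 1 := Nat.pos_of_ne_zero hg1
      have hv : ((0, 1) : ℕ × ℕ).2 < g 0 := by omega
      have := total_of_chain hf hch (φ.symm ⟨(1, 0), hu⟩) (φ.symm ⟨(0, 1), hv⟩)
      rcases this with h | h
      · have := φ.symm.le_iff_le.mp h
        exact Nat.not_succ_le_zero 0 (ple.mp this).1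
      · have := φ.symm.le_iff_le.mp h
        exact Nat.not_succ_le_zero 0 (ple.mp this).2
    rcases hch with h1 | h0
    · rcases hgch with hg1 | hg0
      · -- both rows
        left
        rw [card_row hf h1, card_row hg hg1] at hcard
        funext i
        match i with
        | 0 => exact hcard
        | n + 1 =>
          have hfn : f (n+1) ≤ f 1 := hf (by omega)
          have hgn : g (n+1) ≤ g 1 := hg (by omega)
          omega
      · -- f row, g column
        right
        rw [card_row hf h1, card_col hg hg0] at hcard
        funext j
        have e1 : ¬ (1 < conjP f j) := by
          rw [conjP_lt_iff hf hffin]; omega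
        have e2 : 0 < conjP f j ↔ j < f 0 := by
          rw [conjP_lt_iff hf hffin]
        have e3 : g j ≤ 1 := le_trans (hg (Nat.zero_le _)) hg0
        have e4 : j < conjP g 0 ↔ 0 < g j := conjP_lt_iff hg hgfin 0 j
        omega
    · rcases hgch with hg1 | hg0
      · -- f column, g row
        right
        rw [card_col hf h0, card_row hg hg1] at hcard
        funext j
        match j with
        | 0 => exact hcard
        | n + 1 =>
          have e1 : ¬ (0 < conjP f (n+1)) := by
            rw [conjP_lt_iff hf hffin]; omega
          have e2 : g (n+1) ≤ g 1 := hg (by omega)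
          omega
      · -- both columns
        left
        rw [card_col hf h0, card_col hg hg0] at hcard
        funext i
        have e1 : f i ≤ 1 := le_trans (hf (Nat.zero_le _)) h0
        have e2 : g i ≤ 1 := le_trans (hg (Nat.zero_le _)) hg0
        have e3 : i < conjP f 0 ↔ 0 < f i := conjP_lt_iff hf hffin 0 i
        have e4 : i < conjP g 0 ↔ 0 < g i := conjP_lt_iff hg hgfin 0 i
        omega
  · -- generic case
    push_neg at hch
    obtain ⟨hf1, hf0⟩ := hch
    have h10 : (0:ℕ) < f 1 := Nat.pos_of_ne_zero hf1
    have h01 : (1:ℕ) < f 0 := by omega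
    rcases coord hf hg φ ⟨(1, 0), h10⟩ with h | h
    · exact Or.inl (rigid f g hf hg h10 h01 φ h)
    · -- swap case
      right
      have h' : (φ ⟨(0, 1), h01⟩).val = (1, 0) := by
        rcases coord hf hg φ ⟨(0, 1), h01⟩ with h2 | h2
        · exfalso
          have : φ ⟨(0, 1), h01⟩ = φ ⟨(1, 0), h10⟩ := Subtype.ext (by rw [h, h2]; rfl)
          have := φ.injective this
          have := congrArg (fun z => (Subtype.val z).1) this
          simp at this
        · exact h2
      have hcf : Antitone (conjP f) := conjP_antitone hf hffin
      have hc10 : (0:ℕ) < conjP f 1 := (conjP_lt_iff hf hffin 1 0).2 h01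
      have hc01 : (1:ℕ) < conjP f 0 := (conjP_lt_iff hf hffin 0 1).2 h10
      set e := swapIso f hf hffin
      set ψ := (e.symm.trans φ : YPoset (conjP f) ≃o YPoset g)
      have hψ : (ψ ⟨(1, 0), hc10⟩).val = (1, 0) := by
        have he : e.symm ⟨(1, 0), hc10⟩ = ⟨(0, 1), h01⟩ := Subtype.ext rfl
        show (φ (e.symm ⟨(1, 0), hc10⟩)).val = (1, 0)
        rw [he, h']
      exact rigid (conjP f) g hcf hg hc10 hc01 ψ hψ

end YAux3

namespace YAux4
open YAux YAux2 YAux3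

def rotIso (f : ℕ → ℕ) (I J : ℕ)
    (hmem : ∀ p : ℕ × ℕ, p.2 < f p.1 ↔ (p.1 ≤ I ∧ p.2 ≤ J)) :
    (YPoset f)ᵒᵈ ≃o YPoset f where
  toFun x := ⟨(I - (OrderDual.ofDual x).val.1, J - (OrderDual.ofDual x).val.2), by
    rw [hmem]; exact ⟨Nat.sub_le _ _, Nat.sub_le _ _⟩⟩
  invFun y := OrderDual.toDual ⟨(I - y.val.1, J - y.val.2), by
    rw [hmem]; exact ⟨Nat.sub_le _ _, Nat.sub_le _ _⟩⟩
  left_inv x := by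
    have h := (hmem (OrderDual.ofDual x).val).1 (OrderDual.ofDual x).2
    apply OrderDual.ofDual.injective
    apply Subtype.ext
    simp only [OrderDual.ofDual_toDual]
    apply Prod.ext <;> (dsimp only; omega)
  right_inv y := by
    have h := (hmem y.val).1 y.2
    apply Subtype.ext
    simp only [OrderDual.ofDual_toDual]
    apply Prod.ext <;> (dsimp only; omega)
  map_rel_iff' := by
    intro a b
    have ha := (hmem (OrderDual.ofDual a).val).1 (OrderDual.ofDual a).2
    have hb := (hmem (OrderDual.ofDual b).val).1 (OrderDual.ofDual b).2
    constructor
    · intro h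
      have h' := ple.mp h
      simp only [Equiv.coe_fn_mk] at h'
      show OrderDual.ofDual b ≤ OrderDual.ofDual a
      exact ple.mpr ⟨by omega, by omega⟩
    · intro h
      have h' := ple.mp (show OrderDual.ofDual b ≤ OrderDual.ofDual a from h)
      apply ple.mpr
      simp only [Equiv.coe_fn_mk]
      exact ⟨by omega, by omega⟩

end YAux4

private theorem young_aux
    (f g : ℕ → ℕ) (hf : Antitone f) (hg : Antitone g)
    (hffin : {i | f i ≠ 0}.Finite) (hgfin : {i | g i ≠ 0}.Finite)
    (hne : f 0 ≠ 0) :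
    (Nonempty (YPoset f ≃o YPoset g) ↔ (f = g ∨ conjP f = g)) ∧
    (Nonempty ((YPoset f)ᵒᵈ ≃o YPoset g) →
      (∃ a b : ℕ, f = rectP a b) ∧ (g = f ∨ g = conjP f)) := by
  constructor
  · constructor
    · rintro ⟨φ⟩
      exact YAux3.forward f g hf hg hffin hgfin hne φ
    · rintro (rfl | rfl)
      · exact ⟨OrderIso.refl _⟩
      · exact ⟨YAux3.swapIso f hf hffin⟩
  · rintro ⟨ψ⟩
    have hx0 : ((0,0) : ℕ × ℕ).2 < f 0 := Nat.pos_of_ne_zero hne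
    have hg0 : (0:ℕ) < g 0 := by
      obtain ⟨⟨i, j⟩, hy⟩ := ψ (OrderDual.toDual ⟨(0, 0), hx0⟩)
      have : g i ≤ g 0 := hg (Nat.zero_le _)
      simp only at hy
      omega
    set b : YPoset g := ⟨(0, 0), hg0⟩ with hb
    have hbot : ∀ z : YPoset g, b ≤ z := fun z =>
      YAux.ple.mpr ⟨Nat.zero_le _, Nat.zero_le _⟩
    set M : YPoset f := OrderDual.ofDual (ψ.symm b) with hM
    have hmax : ∀ x : YPoset f, x ≤ M := by
      intro x
      have h1 : b ≤ ψ (OrderDual.toDual x) := hbot _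
      have h2 := ψ.symm.le_iff_le.mpr h1
      rw [ψ.symm_apply_apply] at h2
      exact h2
    set I := M.val.1
    set J := M.val.2
    have hmem : ∀ p : ℕ × ℕ, p.2 < f p.1 ↔ (p.1 ≤ I ∧ p.2 ≤ J) := by
      intro p
      constructor
      · intro h
        exact YAux.ple.mp (hmax ⟨p, h⟩)
      · intro h
        exact YAux.mem_of_le hf h M.2
    have hrect : f = rectP (J + 1) (I + 1) := by
      funext a
      by_cases ha : a < I + 1
      · have h1 : f a ≤ J + 1 := by
          by_contra hc
          push_neg at hc
          have : ((a, J+1) : ℕ × ℕ).2 < f a := by omega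
          have := (hmem (a, J+1)).1 this
          omega
        have h2 : J < f I := by
          have := (hmem (I, J)).2 ⟨le_refl _, le_refl _⟩
          exact this
        have h3 : f I ≤ f a := hf (by omega)
        simp only [rectP, if_pos ha]
        omega
      · have h1 : f a = 0 := by
          by_contra hc
          have : ((a, 0) : ℕ × ℕ).2 < f a := Nat.pos_of_ne_zero hc
          have := (hmem (a, 0)).1 this
          omega
        simp only [rectP, if_neg ha]
        exact h1
    refine ⟨⟨J + 1, I + 1, hrect⟩, ?_⟩
    have ρ := YAux4.rotIso f I J hmem
    have φ : YPoset f ≃o YPoset g := ρ.symm.trans ψ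
    rcases YAux3.forward f g hf hg hffin hgfin hne φ with h | h
    · exact Or.inl h.symm
    · exact Or.inr h.symm

/-- for Young diagrams `f` (nonempty) and `g`,
`P(f) ≅ P(g)` iff `f = g` or `f^T = g`; moreover `P(f)ᵒᵖ ≅ P(g)` is possible only
when `f` is a rectangle, in which case `g` is the same rectangle or its transpose. -/
theorem young_posetIso_iff_eq_or_conj
    (f g : ℕ → ℕ) (hf : Antitone f) (hg : Antitone g)
    (hffin : {i | f i ≠ 0}.Finite) (hgfin : {i | g i ≠ 0}.Finite)
    (hne : f 0 ≠ 0) :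
    (Nonempty (YPoset f ≃o YPoset g) ↔ (f = g ∨ conjP f = g)) ∧
    (Nonempty ((YPoset f)ᵒᵈ ≃o YPoset g) →
      (∃ a b : ℕ, f = rectP a b) ∧ (g = f ∨ g = conjP f)) :=
  young_aux f g hf hg hffin hgfin hne
end

section
/- Let λ be a partition written uniquely as λ = (a_1^{b_1}, …, a_r^{b_r}) with a_1 > a_2 > … > a_r > 0 and all b_i > 0 (so λ consists of r rectangles). For 1 ≤ i ≤ r−1 define λ^i = (a_1^{b_1}, …, a_{i−1}^{b_{i−1}}, a_i^{b_i−1}, (a_{i+1}−1)^{b_{i+1}+1}, a_{i+2}^{b_{i+2}}, …, a_r^{b_r}). Then the conjugate satisfies (λ^T)^i = (λ^{r−i})^T for all i = 1, …, r−1. -/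
/-- The partition `(a_1^{b_1}, …, a_r^{b_r})` given by lists of part sizes `a`
and multiplicities `b`, as a function (0-indexed; zero beyond the last part). -/
def rectsP (a b : List ℕ) : ℕ → ℕ :=
  fun i => ((a.zip b).flatMap fun p => List.replicate p.2 p.1).getD i 0

/-- Removing the `i`-th boundary hook (0-indexed; this is the paper's `λ^{i+1}`):
`λ^{i+1} = (a_1^{b_1}, …, a_i^{b_i}, a_{i+1}^{b_{i+1}−1}, (a_{i+2}−1)^{b_{i+2}+1},
a_{i+3}^{b_{i+3}}, …, a_r^{b_r})`. -/
def hookRemove (a b : List ℕ) (i : ℕ) : ℕ → ℕ :=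
  rectsP (a.set (i + 1) (a.getD (i + 1) 0 - 1))
    ((b.set i (b.getD i 0 - 1)).set (i + 1) (b.getD (i + 1) 0 + 1))

/-! Describe `rectsP c d` by its outer corners: rectangle `k` ends in row `d₀ + ⋯ + dₖ` and
column `cₖ`, and a cell belongs to the diagram iff it lies inside one of these corners.
Transposition swaps the two coordinates and reverses the order of the corners, so the conjugate
of a union of `r` rectangles is described by the same numbers read backwards; for canonical
decompositions this pins down the decomposition of the conjugate, by uniqueness. Removing the `q`-th hook lowers the row of corner `q` and the column of corner
`q + 1` by one; transposed, this lowers the column of corner `r - 1 - q` and the row of corner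
`r - 2 - q` of the conjugate, which is removing its `(r - 2 - q)`-th hook. -/

lemma List.lt_length_of_lt_getD {l : List ℕ} {j k : ℕ} (h : j < l.getD k 0) : k < l.length := by
  by_contra hk
  rw [List.getD_eq_default _ _ (by omega)] at h
  omega

lemma List.getD_set_of_lt {l : List ℕ} {p : ℕ} (hp : p < l.length) (x k : ℕ) :
    (l.set p x).getD k 0 = if p = k then x else l.getD k 0 := by
  simp only [List.getD_eq_getElem?_getD, List.getElem?_set, hp, if_true]
  split_ifs <;> simp_all

lemma List.getD_ofFn {n : ℕ} (f : Fin n → ℕ) {k : ℕ} (hk : k < n) :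
    (List.ofFn f).getD k 0 = f ⟨k, hk⟩ := by
  rw [List.getD_eq_getElem _ _ (by simpa using hk), List.getElem_ofFn]

lemma List.getD_pos {l : List ℕ} (hpos : ∀ x ∈ l, 0 < x) {k : ℕ} (hk : k < l.length) :
    0 < l.getD k 0 := by
  rw [List.getD_eq_getElem _ _ hk]
  exact hpos _ (List.getElem_mem _)

lemma List.antitone_getD {c : List ℕ} (hc : c.Pairwise (· ≥ ·)) : Antitone fun k => c.getD k 0 := by
  intro s t hst
  show c.getD t 0 ≤ c.getD s 0
  by_cases ht : t < c.length
  · rw [List.getD_eq_getElem _ _ ht, List.getD_eq_getElem _ _ (by omega)]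
    rcases hst.lt_or_eq with hst | rfl
    · exact List.pairwise_iff_getElem.mp hc s t _ ht hst
    · exact le_rfl
  · rw [List.getD_eq_default _ _ (not_lt.mp ht)]
    exact Nat.zero_le _

def prefixSum (l : List ℕ) (k : ℕ) : ℕ := ∑ t ∈ Finset.range k, l.getD t 0

section PrefixSum

variable (l : List ℕ)

@[simp] lemma prefixSum_zero : prefixSum l 0 = 0 := rfl

lemma prefixSum_succ (k : ℕ) : prefixSum l (k + 1) = prefixSum l k + l.getD k 0 :=
  Finset.sum_range_succ _ k

lemma prefixSum_cons_succ (y : ℕ) (k : ℕ) : prefixSum (y :: l) (k + 1) = y + prefixSum l k := by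
  simp only [prefixSum, Finset.sum_range_succ', List.getD_cons_succ, List.getD_cons_zero]
  ac_rfl

@[simp] lemma prefixSum_nil (k : ℕ) : prefixSum [] k = 0 := by
  simp [prefixSum]

lemma prefixSum_mono : Monotone (prefixSum l) := fun _ _ h =>
  Finset.sum_le_sum_of_subset (Finset.range_mono h)

variable {l}

lemma prefixSum_lt_prefixSum (hpos : ∀ x ∈ l, 0 < x) {s t : ℕ} (hst : s < t)
    (ht : t ≤ l.length) : prefixSum l s < prefixSum l t := by
  refine Finset.sum_lt_sum_of_subset (Finset.range_mono hst.le) (i := s) (by simpa using hst)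
    (by simp) (List.getD_pos hpos (by omega)) (fun _ _ _ => Nat.zero_le _)

lemma prefixSum_set_sub_one_set_add_one {p : ℕ} (hp : p + 1 < l.length)
    (hpos : 0 < l.getD p 0) (t : ℕ) :
    prefixSum ((l.set p (l.getD p 0 - 1)).set (p + 1) (l.getD (p + 1) 0 + 1)) t =
      if t = p + 1 then prefixSum l t - 1 else prefixSum l t := by
  induction t with
  | zero => simp
  | succ t ih =>
    have hp1 := prefixSum_succ l p
    rw [prefixSum_succ, ih, List.getD_set_of_lt (by simpa using hp),
      List.getD_set_of_lt (by omega), prefixSum_succ]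
    split_ifs <;> subst_vars <;> omega

end PrefixSum

lemma rectsP_nil_left (d : List ℕ) (i : ℕ) : rectsP [] d i = 0 := by
  simp [rectsP]

lemma rectsP_nil_right (c : List ℕ) (i : ℕ) : rectsP c [] i = 0 := by
  simp [rectsP]

lemma rectsP_cons (x y : ℕ) (c d : List ℕ) (i : ℕ) :
    rectsP (x :: c) (y :: d) i = if i < y then x else rectsP c d (i - y) := by
  unfold rectsP
  rw [List.zip_cons_cons, List.flatMap_cons]
  split_ifs with h
  · rw [List.getD_append _ _ _ _ (by simpa using h), List.getD_eq_getElem _ _ (by simpa using h),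
      List.getElem_replicate]
  · rw [List.getD_append_right _ _ _ _ (by simpa using h)]
    simp

lemma rectsP_eq_zero_or_mem (c d : List ℕ) (i : ℕ) : rectsP c d i = 0 ∨ rectsP c d i ∈ c := by
  induction c generalizing d i with
  | nil => exact .inl (rectsP_nil_left d i)
  | cons x c ih =>
    cases d with
    | nil => exact .inl (rectsP_nil_right _ i)
    | cons y d =>
      rw [rectsP_cons]
      split_ifs
      · exact .inr List.mem_cons_self
      · exact (ih d _).imp_right (List.mem_cons_of_mem x)

lemma lt_rectsP_iff {c : List ℕ} (hc : c.Pairwise (· ≥ ·)) (d : List ℕ) (i j : ℕ) :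
    j < rectsP c d i ↔ ∃ k, j < c.getD k 0 ∧ i < prefixSum d (k + 1) := by
  induction c generalizing d i with
  | nil => simp [rectsP_nil_left]
  | cons x c ih =>
    cases d with
    | nil => simp [rectsP_nil_right]
    | cons y d =>
      have hle : ∀ k, c.getD k 0 ≤ x := fun k => List.antitone_getD hc (Nat.zero_le (k + 1))
      have hsplit : (∃ k, j < (x :: c).getD k 0 ∧ i < prefixSum (y :: d) (k + 1)) ↔
          (j < x ∧ i < y) ∨ ∃ k, j < c.getD k 0 ∧ i < y + prefixSum d (k + 1) := by
        constructor
        · rintro ⟨_ | k, hk⟩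
          · simpa [prefixSum_cons_succ] using Or.inl hk
          · exact .inr ⟨k, by simpa [prefixSum_cons_succ] using hk⟩
        · rintro (hk | ⟨k, hk⟩)
          · exact ⟨0, by simpa [prefixSum_cons_succ] using hk⟩
          · exact ⟨k + 1, by simpa [prefixSum_cons_succ] using hk⟩
      rw [rectsP_cons, hsplit]
      split_ifs with hi
      · exact ⟨fun h => .inl ⟨h, hi⟩, by rintro (h | ⟨k, hk, -⟩); exacts [h.1, hk.trans_le (hle k)]⟩
      · rw [ih (List.pairwise_cons.mp hc).2]
        refine ⟨fun ⟨k, hk⟩ => .inr ⟨k, hk.1, by omega⟩, ?_⟩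
        rintro (h | ⟨k, hk⟩)
        exacts [absurd h.2 hi, ⟨k, hk.1, by omega⟩]

lemma conjP_eq_of_lt_iff {f g : ℕ → ℕ} (h : ∀ i j, j < f i ↔ i < g j) : conjP f = g := by
  funext j
  have hset : {i : ℕ | j < f i} = ↑(Finset.range (g j)) := by
    ext i
    simp [h]
  rw [conjP, hset, Set.ncard_coe_finset, Finset.card_range]

/-- The column ends `c` of one diagram are the row ends `prefixSum g` of the other, in reverse. -/
def IsRevPrefixSums (r : ℕ) (c g : List ℕ) : Prop :=
  ∀ k < r, c.getD k 0 = prefixSum g (r - k)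

namespace IsRevPrefixSums

variable {r : ℕ} {c d e g : List ℕ}

lemma pairwise_ge (h : IsRevPrefixSums r c g) (hc : c.length = r) : c.Pairwise (· ≥ ·) := by
  refine List.pairwise_iff_getElem.mpr fun s t hs ht hst => ?_
  rw [← List.getD_eq_getElem _ 0 hs, ← List.getD_eq_getElem _ 0 ht, h s (by omega),
    h t (by omega)]
  exact prefixSum_mono g (by omega)

lemma exists_corner_transpose (hcg : IsRevPrefixSums r c g) (hed : IsRevPrefixSums r e d)
    (hc : c.length = r) {i j : ℕ} (hij : ∃ k, j < c.getD k 0 ∧ i < prefixSum d (k + 1)) :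
    ∃ k, i < e.getD k 0 ∧ j < prefixSum g (k + 1) := by
  obtain ⟨k, hj, hi⟩ := hij
  have hk : k < r := hc ▸ List.lt_length_of_lt_getD hj
  refine ⟨r - 1 - k, ?_, ?_⟩
  · rwa [hed _ (by omega), show r - (r - 1 - k) = k + 1 by omega]
  · rwa [show r - 1 - k + 1 = r - k by omega, ← hcg k hk]

theorem conjP_rectsP_eq (hcg : IsRevPrefixSums r c g) (hed : IsRevPrefixSums r e d)
    (hc : c.length = r) (he : e.length = r) : conjP (rectsP c d) = rectsP e g := by
  refine conjP_eq_of_lt_iff fun i j => ?_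
  rw [lt_rectsP_iff (hcg.pairwise_ge hc), lt_rectsP_iff (hed.pairwise_ge he)]
  exact ⟨hcg.exists_corner_transpose hed hc, hed.exists_corner_transpose hcg he⟩

lemma hook {p q : ℕ} (h : IsRevPrefixSums r c g) (hr : p + q + 2 = r) (hc : c.length = r)
    (hg : g.length = r) (hpos : 0 < g.getD p 0) :
    IsRevPrefixSums r (c.set (q + 1) (c.getD (q + 1) 0 - 1))
      ((g.set p (g.getD p 0 - 1)).set (p + 1) (g.getD (p + 1) 0 + 1)) := by
  intro k hk
  rw [List.getD_set_of_lt (by omega), prefixSum_set_sub_one_set_add_one (by omega) hpos]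
  by_cases hkq : q + 1 = k
  · subst hkq
    rw [if_pos rfl, if_pos (by omega), h _ hk]
  · rw [if_neg hkq, if_neg (by omega), h k hk]

end IsRevPrefixSums

structure IsCanonical (c d : List ℕ) : Prop where
  length_eq : c.length = d.length
  chain : c.IsChain (· > ·)
  pos_left : ∀ x ∈ c, 0 < x
  pos_right : ∀ y ∈ d, 0 < y

namespace IsCanonical

variable {x y : ℕ} {c d c' d' : List ℕ}

lemma tail (h : IsCanonical (x :: c) (y :: d)) : IsCanonical c d where
  length_eq := by simpa using h.length_eq
  chain := List.IsChain.tail h.chain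
  pos_left z hz := h.pos_left z (List.mem_cons_of_mem x hz)
  pos_right z hz := h.pos_right z (List.mem_cons_of_mem y hz)

lemma pairwise (h : IsCanonical c d) : c.Pairwise (· > ·) :=
  List.isChain_iff_pairwise.mp h.chain

lemma rectsP_zero (h : IsCanonical (x :: c) (y :: d)) : rectsP (x :: c) (y :: d) 0 = x := by
  rw [rectsP_cons, if_pos (h.pos_right y List.mem_cons_self)]

lemma rectsP_eq_head_iff (h : IsCanonical (x :: c) (y :: d)) (i : ℕ) :
    rectsP (x :: c) (y :: d) i = x ↔ i < y := by
  rw [rectsP_cons]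
  split_ifs with hi
  · exact iff_of_true rfl hi
  · refine iff_of_false ?_ hi
    rcases rectsP_eq_zero_or_mem c d (i - y) with h0 | hmem
    · exact h0 ▸ (h.pos_left x List.mem_cons_self).ne
    · exact ((List.pairwise_cons.mp h.pairwise).1 _ hmem).ne

lemma getD_lt_getD (h : IsCanonical c d) {s t : ℕ} (hst : s < t)
    (hs : s < c.length) : c.getD t 0 < c.getD s 0 := by
  rw [List.getD_eq_getElem _ _ hs]
  by_cases ht : t < c.length
  · rw [List.getD_eq_getElem _ _ ht]
    exact List.pairwise_iff_getElem.mp h.pairwise s t hs ht hst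
  · rw [List.getD_eq_default _ _ (by omega)]
    exact h.pos_left _ (List.getElem_mem _)

theorem rectsP_injective (h : IsCanonical c d) (h' : IsCanonical c' d')
    (heq : rectsP c d = rectsP c' d') : c = c' ∧ d = d' := by
  induction c generalizing d c' d' with
  | nil =>
    obtain rfl : d = [] := List.eq_nil_of_length_eq_zero h.length_eq.symm
    match c', d', h' with
    | [], [], _ => exact ⟨rfl, rfl⟩
    | x' :: c', y' :: d', h' =>
      have := congrFun heq 0
      rw [rectsP_nil_left, h'.rectsP_zero] at this
      exact absurd this.symm (h'.pos_left x' List.mem_cons_self).ne'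
  | cons x c ih =>
    match d, c', d', h, h' with
    | y :: d, [], [], h, _ =>
      have := congrFun heq 0
      rw [rectsP_nil_left, h.rectsP_zero] at this
      exact absurd this (h.pos_left x List.mem_cons_self).ne'
    | y :: d, x' :: c', y' :: d', h, h' =>
      obtain rfl : x = x' := by
        simpa [h.rectsP_zero, h'.rectsP_zero] using congrFun heq 0
      obtain rfl : y = y' := eq_of_forall_lt_iff fun i => by
        rw [← h.rectsP_eq_head_iff, ← h'.rectsP_eq_head_iff, heq]
      have htail : rectsP c d = rectsP c' d' := funext fun i => by
        simpa [rectsP_cons] using congrFun heq (i + y)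
      obtain ⟨rfl, rfl⟩ := ih h.tail h'.tail htail
      exact ⟨rfl, rfl⟩

end IsCanonical

def conjParts (b : List ℕ) : List ℕ :=
  List.ofFn fun k : Fin b.length => prefixSum b (b.length - k)

def conjMults (a : List ℕ) : List ℕ :=
  List.ofFn fun k : Fin a.length => a.getD (a.length - 1 - k) 0 - a.getD (a.length - k) 0

lemma isRevPrefixSums_conjParts (b : List ℕ) : IsRevPrefixSums b.length (conjParts b) b :=
  fun _ hk => List.getD_ofFn _ hk

lemma isRevPrefixSums_conjMults {a : List ℕ} (ha : a.Pairwise (· ≥ ·)) :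
    IsRevPrefixSums a.length a (conjMults a) := fun k hk => by
  set f : ℕ → ℕ := fun t => a.getD (a.length - t) 0
  have hf : Monotone f := fun s t hst => List.antitone_getD ha (Nat.sub_le_sub_left hst _)
  calc a.getD k 0 = f (a.length - k) - f 0 := by simp [f, Nat.sub_sub_self hk.le]
    _ = ∑ t ∈ Finset.range (a.length - k), (f (t + 1) - f t) := (Finset.sum_range_tsub hf _).symm
    _ = prefixSum (conjMults a) (a.length - k) := Finset.sum_congr rfl fun t ht => by
          rw [conjMults, List.getD_ofFn _ (by simp at ht; omega), Nat.sub_sub, Nat.add_comm 1 t]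

lemma IsCanonical.conj {a b : List ℕ} (h : IsCanonical a b) :
    IsCanonical (conjParts b) (conjMults a) where
  length_eq := by simp [conjParts, conjMults, h.length_eq]
  chain := by
    refine List.isChain_iff_pairwise.mpr (List.pairwise_ofFn.mpr fun s t hst => ?_)
    exact prefixSum_lt_prefixSum h.pos_right (by omega) (by omega)
  pos_left x hx := by
    obtain ⟨k, rfl⟩ := List.mem_ofFn.mp hx
    exact prefixSum_lt_prefixSum h.pos_right (s := 0) (by omega) (by omega)
  pos_right x hx := by
    obtain ⟨k, rfl⟩ := List.mem_ofFn.mp hx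
    exact Nat.sub_pos_of_lt (h.getD_lt_getD (by omega) (by omega))

theorem IsCanonical.isRevPrefixSums_of_conjP_eq {a b a' b' : List ℕ} (h : IsCanonical a b)
    (h' : IsCanonical a' b') (hconj : conjP (rectsP a b) = rectsP a' b') :
    IsRevPrefixSums a.length a b' ∧ IsRevPrefixSums a.length a' b := by
  have hmults := isRevPrefixSums_conjMults (h.pairwise.imp fun hlt => hlt.le)
  have hparts := isRevPrefixSums_conjParts b
  rw [← h.length_eq] at hparts
  have hlen : (conjParts b).length = a.length := by simp [conjParts, h.length_eq]
  obtain ⟨rfl, rfl⟩ :=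
    h'.rectsP_injective h.conj (hconj.symm.trans (hmults.conjP_rectsP_eq hparts rfl hlen))
  exact ⟨hmults, hparts⟩

theorem conjP_hookRemove {p q r : ℕ} (hr : p + q + 2 = r) {a b a' b' : List ℕ}
    (ha : a.length = r) (hb : b.length = r) (ha' : a'.length = r) (hb' : b'.length = r)
    (hab' : IsRevPrefixSums r a b') (ha'b : IsRevPrefixSums r a' b)
    (hbq : 0 < b.getD q 0) (hb'p : 0 < b'.getD p 0) :
    conjP (hookRemove a b q) = hookRemove a' b' p :=
  (hab'.hook hr ha hb' hb'p).conjP_rectsP_eq (ha'b.hook (by omega) ha' hb hbq)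
    (by simpa using ha) (by simpa using ha')

/-- if `λ = (a_1^{b_1},…,a_r^{b_r})` is canonical and
`λ^T = (a'_1^{b'_1},…,a'_r^{b'_r})` is the canonical decomposition of its
conjugate, then `(λ^T)^i = (λ^{r−i})^T` for `i = 1, …, r−1`. -/
theorem conj_hookRemove (r : ℕ) (a b a' b' : List ℕ)
    (ha : a.length = r) (hb : b.length = r) (ha' : a'.length = r) (hb' : b'.length = r)
    (hch : a.Chain' (· > ·)) (hch' : a'.Chain' (· > ·))
    (hap : ∀ x ∈ a, 0 < x) (hbp : ∀ x ∈ b, 0 < x)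
    (hap' : ∀ x ∈ a', 0 < x) (hbp' : ∀ x ∈ b', 0 < x)
    (hconj : conjP (rectsP a b) = rectsP a' b') :
    ∀ i, 1 ≤ i → i < r →
      hookRemove a' b' (i - 1) = conjP (hookRemove a b (r - i - 1)) := by
  intro i hi hir
  have hab : IsCanonical a b := ⟨ha.trans hb.symm, hch, hap, hbp⟩
  have hab' : IsCanonical a' b' := ⟨ha'.trans hb'.symm, hch', hap', hbp'⟩
  obtain ⟨hrel, hrel'⟩ := hab.isRevPrefixSums_of_conjP_eq hab' hconj
  rw [ha] at hrel hrel'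
  exact (conjP_hookRemove (by omega) ha hb ha' hb' hrel hrel'
    (List.getD_pos hbp (by omega)) (List.getD_pos hbp' (by omega))).symm
end

section
/- Let λ = (a_1, a_2^{b_2}) and μ = (a_1′, a_2′^{b_2′}) be partitions with a_1 > a_2 > 1, a_1′ > a_2′ > 1, b_2, b_2′ > 0, and |λ| = |μ|. Suppose a_2 − 1 = b_2′ + 1 and a_2′ − 1 = b_2 + 1, and suppose λ and μ have the same number of subdiagrams of every size. Then λ = μ (and in fact a_2 − 1 = a_2′ − 1 = b_2 + 1 = b_2′ + 1). -/
/-- The size (number of boxes) of a partition. -/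
noncomputable def psize (f : ℕ → ℕ) : ℕ := Set.ncard {p : ℕ × ℕ | p.2 < f p.1}

/-- The number of subdiagrams of `f` of size `s`. -/
noncomputable def subCount (f : ℕ → ℕ) (s : ℕ) : ℕ :=
  Set.ncard {g : ℕ → ℕ | Antitone g ∧ g ≤ f ∧ psize g = s}

lemma rectsP_two (x y b i : ℕ) :
    rectsP [x, y] [1, b] i = if i = 0 then x else if i ≤ b then y else 0 := by
  cases i with
  | zero => simp [rectsP]
  | succ n =>
    simp only [rectsP, List.zip_cons_cons, List.zip_nil_right, List.flatMap_cons,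
      List.flatMap_nil, List.replicate_one, List.append_nil, List.singleton_append,
      List.getD_eq_getElem?_getD, List.getElem?_cons_succ, List.getElem?_replicate,
      Nat.add_one_ne_zero, if_false, Nat.add_one_le_iff]
    split_ifs <;> rfl

lemma rectsP_two_eq_zero {x y b i : ℕ} (hi : b + 1 ≤ i) : rectsP [x, y] [1, b] i = 0 := by
  rw [rectsP_two, if_neg (by omega), if_neg (by omega)]

section Diagram

variable {f g : ℕ → ℕ} {n : ℕ}

lemma finite_diagram (hf : ∀ i, n ≤ i → f i = 0) : {p : ℕ × ℕ | p.2 < f p.1}.Finite := by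
  refine ((Set.finite_Iio n).prod (Set.finite_Iio (∑ i ∈ Finset.range n, f i))).subset ?_
  rintro ⟨i, j⟩ (hij : j < f i)
  have hin : i < n := by
    by_contra! h
    rw [hf i h] at hij
    exact Nat.not_lt_zero j hij
  exact ⟨hin, hij.trans_le (Finset.single_le_sum (fun _ _ => Nat.zero_le _)
    (Finset.mem_range.2 hin))⟩

lemma finite_setOf_le (hf : ∀ i, n ≤ i → f i = 0) : {g : ℕ → ℕ | g ≤ f}.Finite := by
  refine Set.Finite.of_finite_image
    (f := fun g (i : Fin n) => (⟨min (g i) (f i), by omega⟩ : Fin (f i + 1)))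
    (Set.toFinite _) fun g₁ hg₁ g₂ hg₂ heq => funext fun i => ?_
  have h₁ : g₁ i ≤ f i := hg₁ i
  have h₂ : g₂ i ≤ f i := hg₂ i
  by_cases hi : i < n
  · have := Fin.val_eq_of_eq (congrFun heq ⟨i, hi⟩)
    simp only at this
    omega
  · have := hf i (not_lt.1 hi)
    omega

lemma le_psize (hg : {p : ℕ × ℕ | p.2 < g p.1}.Finite) (i : ℕ) : g i ≤ psize g := by
  have hrow : Prod.mk i '' Set.Iio (g i) ⊆ {p : ℕ × ℕ | p.2 < g p.1} := by
    rintro _ ⟨j, hj, rfl⟩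
    exact hj
  simpa [psize, Set.ncard_image_of_injective _ (Prod.mk_right_injective i)] using
    Set.ncard_le_ncard hrow hg

lemma subCount_lt_of_forall_le {f' : ℕ → ℕ} (hf' : ∀ i, n ≤ i → f' i = 0) {s : ℕ}
    (hle : ∀ g, Antitone g → g ≤ f → psize g = s → g ≤ f')
    (g₀ : ℕ → ℕ) (hg₀ : Antitone g₀) (hg₀f' : g₀ ≤ f') (hg₀s : psize g₀ = s) (hg₀f : ¬ g₀ ≤ f) :
    subCount f s < subCount f' s :=
  Set.ncard_lt_ncard
    ⟨fun g ⟨hanti, hgf, hgs⟩ => ⟨hanti, hle g hanti hgf hgs, hgs⟩,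
      fun hsub => hg₀f (hsub ⟨hg₀, hg₀f', hg₀s⟩).2.1⟩
    ((finite_setOf_le hf').subset fun _ hg => hg.2.1)

end Diagram

def column (s : ℕ) : ℕ → ℕ := fun i => if i < s then 1 else 0

lemma column_antitone (s : ℕ) : Antitone (column s) := by
  intro i j hij
  simp only [column]
  split_ifs <;> omega

lemma psize_column (s : ℕ) : psize (column s) = s := by
  have hdiag : {p : ℕ × ℕ | p.2 < column s p.1} = (fun i => (i, 0)) '' Set.Iio s := by
    ext ⟨i, j⟩
    simp only [column, Set.mem_ofPred_eq, Set.mem_image, Set.mem_Iio, Prod.mk.injEq]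
    split_ifs with hi
    · exact ⟨fun hj => ⟨i, hi, rfl, by omega⟩, by rintro ⟨_, _, rfl, rfl⟩; omega⟩
    · exact ⟨fun hj => absurd hj (by omega), by rintro ⟨_, hk, rfl, -⟩; exact absurd hk hi⟩
  rw [psize, hdiag, Set.ncard_image_of_injective _ (Prod.mk_left_injective 0)]
  simp

lemma subCount_rectsP_two_lt {x y b x' y' b' : ℕ} (hb : b < b') (hx' : b + 2 ≤ x')
    (hy' : b + 2 ≤ y') :
    subCount (rectsP [x, y] [1, b]) (b + 2) < subCount (rectsP [x', y'] [1, b']) (b + 2) := by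
  refine subCount_lt_of_forall_le (n := b' + 1) (fun i hi => rectsP_two_eq_zero hi)
    ?_ (column (b + 2)) (column_antitone _) ?_ (psize_column _) ?_
  · intro g _ hgf hgs i
    have hrow : g i ≤ b + 2 :=
      hgs ▸ le_psize ((finite_diagram fun _ => rectsP_two_eq_zero).subset fun p hp =>
        hp.trans_le (hgf p.1)) i
    have hgi : g i ≤ rectsP [x, y] [1, b] i := hgf i
    show g i ≤ rectsP [x', y'] [1, b'] i
    rw [rectsP_two] at hgi ⊢
    split_ifs at hgi ⊢ <;> omega
  · intro i
    show column (b + 2) i ≤ rectsP [x', y'] [1, b'] i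
    rw [column, rectsP_two]
    split_ifs <;> omega
  · intro hcol
    have := hcol (b + 1)
    rw [column, if_pos (by omega), rectsP_two_eq_zero le_rfl] at this
    exact Nat.one_ne_zero (Nat.le_zero.1 this)

theorem two_rectangle_case_general (a1 a2 b2 a1' a2' b2' : ℕ)
    (h1 : a2 < a1) (h1' : a2' < a1')
    (hsz : a1 + a2 * b2 = a1' + a2' * b2')
    (he1 : a2 - 1 = b2' + 1) (he2 : a2' - 1 = b2 + 1)
    (hcnt : ∀ s, subCount (rectsP [a1, a2] [1, b2]) s
                = subCount (rectsP [a1', a2'] [1, b2']) s) :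
    a1 = a1' ∧ a2 = a2' ∧ b2 = b2' ∧ a2 = b2 + 2 ∧ a2' = b2' + 2 := by
  have hb : b2 = b2' := by
    rcases lt_trichotomy b2 b2' with hlt | heq | hgt
    · exact ((subCount_rectsP_two_lt hlt (by omega) (by omega)).ne (hcnt _)).elim
    · exact heq
    · exact ((subCount_rectsP_two_lt hgt (by omega) (by omega)).ne (hcnt _).symm).elim
  subst hb
  obtain rfl : a2 = a2' := by omega
  exact ⟨by omega, rfl, rfl, by omega, by omega⟩

/-- let `λ = (a_1, a_2^{b_2})`, `μ = (a_1′, a_2′^{b_2′})` with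
`a_1 > a_2 > 1`, `a_1′ > a_2′ > 1`, `b_2, b_2′ > 0`, `|λ| = |μ|`,
`a_2 − 1 = b_2′ + 1` and `a_2′ − 1 = b_2 + 1`.  If `λ` and `μ` have the same
number of subdiagrams of every size, then `λ = μ`, and in fact
`a_2 − 1 = a_2′ − 1 = b_2 + 1 = b_2′ + 1`. -/
theorem two_rectangle_case (a1 a2 b2 a1' a2' b2' : ℕ)
    (h1 : a2 < a1) (h2 : 1 < a2) (h1' : a2' < a1') (h2' : 1 < a2')
    (hb : 0 < b2) (hb' : 0 < b2')
    (hsz : a1 + a2 * b2 = a1' + a2' * b2')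
    (he1 : a2 - 1 = b2' + 1) (he2 : a2' - 1 = b2 + 1)
    (hcnt : ∀ s, subCount (rectsP [a1, a2] [1, b2]) s
                = subCount (rectsP [a1', a2'] [1, b2']) s) :
    a1 = a1' ∧ a2 = a2' ∧ b2 = b2' ∧ a2 = b2 + 2 ∧ a2' = b2' + 2 :=
  two_rectangle_case_general a1 a2 b2 a1' a2' b2' h1 h1' hsz he1 he2 hcnt
end

section
/- Let λ = (a_1, 1^{b_2}) and μ = (a_1′, 1^{b_2′}) be hooks with a_1, a_1′ ≥ 1 and b_2, b_2′ ≥ 0, and assume a_1 ≤ b_2 + 1 and a_1′ ≤ b_2′ + 1 and |λ| = |μ|. If λ and μ contain the same number of subdiagrams of size s for every s, then λ = μ. -/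
/-- The hook `(c, 1^d)` as a partition (0-indexed), of size `c + d`. -/
def hookP (c d : ℕ) : ℕ → ℕ := fun i => if i = 0 then c else if i ≤ d then 1 else 0

lemma psize_hookP (c d : ℕ) : psize (hookP c d) = c + d := by
  have hset : {p : ℕ × ℕ | p.2 < hookP c d p.1} =
      ↑(({0} ×ˢ Finset.Iio c ∪ Finset.Icc 1 d ×ˢ {0} : Finset (ℕ × ℕ))) := by
    ext ⟨i, j⟩
    simp only [hookP, Set.mem_setOf_eq, Finset.coe_union, Set.mem_union, Finset.mem_coe,
      Finset.mem_product, Finset.mem_singleton, Finset.mem_Iio, Finset.mem_Icc]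
    split_ifs <;> omega
  rw [psize, hset, Set.ncard_coe_finset, Finset.card_union_of_disjoint, Finset.card_product,
    Finset.card_product]
  · simp
  · rw [Finset.disjoint_left]
    rintro ⟨i, j⟩ hp hq
    simp at hp hq
    omega

lemma psize_zero : psize (fun _ => 0) = 0 := by
  have : {p : ℕ × ℕ | p.2 < (fun _ => 0) p.1} = ∅ := by ext p; simp
  rw [psize, this, Set.ncard_empty]

lemma hookP_antitone {c : ℕ} (d : ℕ) (hc : 1 ≤ c) : Antitone (hookP c d) := by
  intro i j hij
  simp only [hookP]
  split_ifs <;> omega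

lemma hookP_le {c d a b : ℕ} (hca : c ≤ a) (hdb : d ≤ b) : hookP c d ≤ hookP a b := by
  intro i
  simp only [hookP]
  split_ifs <;> omega

lemma hook_rep {a b : ℕ} {g : ℕ → ℕ} (hg : Antitone g) (hle : g ≤ hookP a b)
    (h0 : 1 ≤ g 0) : g = hookP (g 0) (Nat.findGreatest (fun i => 1 ≤ g i) b) := by
  set d := Nat.findGreatest (fun i => 1 ≤ g i) b with hd
  have hgd : ∀ i, 1 ≤ i → g i ≤ 1 := by
    intro i hi
    have := hle i
    simp only [hookP, show i ≠ 0 by omega, if_false] at this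
    split at this <;> omega
  have hgb : ∀ i, b < i → g i = 0 := by
    intro i hi
    have := hle i
    simp only [hookP, show i ≠ 0 by omega, if_false, show ¬ i ≤ b by omega] at this
    omega
  funext i
  by_cases hi : i = 0
  · simp [hi, hookP]
  · simp only [hookP, hi, if_false]
    by_cases hid : i ≤ d
    · have hdpos : d ≠ 0 := by omega
      have hPd : 1 ≤ g d := (Nat.findGreatest_eq_iff.1 hd.symm).2.1 hdpos
      have h1 := hg hid
      have h2 := hgd i (by omega)
      simp only [hid, if_true]
      omega
    · simp only [hid, if_false]
      by_cases hib : i ≤ b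
      · by_contra hne
        have hgi : 1 ≤ g i := by omega
        have := Nat.le_findGreatest (P := fun i => 1 ≤ g i) hib hgi
        omega
      · exact hgb i (by omega)

lemma subCount_hookP (a b s : ℕ) (ha : 1 ≤ a) (hs : 1 ≤ s) (hsb : s ≤ b + 1) :
    subCount (hookP a b) s = min a s := by
  have hset : {g : ℕ → ℕ | Antitone g ∧ g ≤ hookP a b ∧ psize g = s} =
      (fun c => hookP c (s - c)) '' ↑(Finset.Icc 1 (min a s)) := by
    ext g
    simp only [Set.mem_setOf_eq, Set.mem_image, Finset.coe_Icc, Set.mem_Icc]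
    constructor
    · rintro ⟨hanti, hle, hps⟩
      have h0 : 1 ≤ g 0 := by
        by_contra h0
        have hz : g = fun _ => 0 := by
          funext i
          have := hanti (Nat.zero_le i)
          omega
        rw [hz, psize_zero] at hps
        omega
      have hrep := hook_rep hanti hle h0
      set c := g 0 with hc
      set d := Nat.findGreatest (fun i => 1 ≤ g i) b with hd
      have hcs : c + d = s := by rw [hrep, psize_hookP] at hps; exact hps
      have hca : c ≤ a := by
        rw [hc]
        exact (hle 0).trans_eq (by simp [hookP])
      refine ⟨c, ⟨h0, le_min hca (by omega)⟩, ?_⟩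
      show hookP c (s - c) = g
      rw [show s - c = d by omega, ← hrep]
    · rintro ⟨c, ⟨hc1, hc2⟩, rfl⟩
      have hca : c ≤ a := le_trans hc2 (min_le_left _ _)
      have hcs : c ≤ s := le_trans hc2 (min_le_right _ _)
      refine ⟨hookP_antitone _ hc1, hookP_le hca (by omega), ?_⟩
      rw [psize_hookP]; omega
  rw [subCount, hset, Set.ncard_image_of_injOn, Set.ncard_coe_finset, Nat.card_Icc]
  · omega
  · intro x hx y hy hxy
    have := congrFun hxy 0
    simpa [hookP] using this

/-- two hooks `λ = (a_1, 1^{b_2})`, `μ = (a_1′, 1^{b_2′})` with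
`a_1 ≤ b_2 + 1`, `a_1′ ≤ b_2′ + 1` and `|λ| = |μ|`, which have the same number of
subdiagrams of every size, are equal. -/
theorem hooks_determined (a1 b2 a1' b2' : ℕ)
    (h : 1 ≤ a1) (h' : 1 ≤ a1')
    (hle : a1 ≤ b2 + 1) (hle' : a1' ≤ b2' + 1)
    (hsz : a1 + b2 = a1' + b2')
    (hcnt : ∀ s, subCount (hookP a1 b2) s = subCount (hookP a1' b2') s) :
    a1 = a1' ∧ b2 = b2' := by
  have key : a1 = a1' := by
    rcases le_total a1 a1' with hc | hc
    · have := hcnt a1'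
      rw [subCount_hookP a1 b2 a1' h h' (by omega),
        subCount_hookP a1' b2' a1' h' h' (by omega)] at this
      omega
    · have := hcnt a1
      rw [subCount_hookP a1 b2 a1 h h (by omega),
        subCount_hookP a1' b2' a1 h' h (by omega)] at this
      omega
  exact ⟨key, by omega⟩
end

section
/- Let λ, μ be partitions with canonical decompositions λ = (a_1^{b_1},…,a_r^{b_r}) and μ = (a_1′^{b_1′},…,a_r′^{b_r′}) with r ≥ 2, a_1 > … > a_r > 0, a_1′ > … > a_r′ > 0, all b_i, b_i′ > 0, and b_1 = b_1′ = 1, a_r, a_r′ > 1. Define ξ(ν) = ν_1 + (number of nonzero parts of ν) − 1. With λ^i as in the hook-removal formula, ξ(λ^1) < ξ(λ^{r−1}) whenever r > 2 (and similarly for μ). Consequently, it is impossible that simultaneously (λ^1 = μ^{r−1} or (λ^1)^T = μ^{r−1}) and (λ^{r−1} = μ^1 or (λ^{r−1})^T = μ^1). -/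
/-- `ξ(ν) = ν_1 + (number of nonzero parts of ν) − 1`, the longest hook length. -/
noncomputable def xiP (f : ℕ → ℕ) : ℕ := f 0 + Set.ncard {i : ℕ | 0 < f i} - 1

def Lof (A B : List ℕ) : List ℕ := (A.zip B).flatMap fun p => List.replicate p.2 p.1

lemma rectsP_eq (A B : List ℕ) : rectsP A B = fun i => (Lof A B).getD i 0 := rfl

lemma mem_Lof {x : ℕ} {A B : List ℕ} (h : x ∈ Lof A B) : x ∈ A := by
  unfold Lof at h
  simp only [List.mem_flatMap] at h
  obtain ⟨p, hp, hx⟩ := h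
  rw [List.eq_of_mem_replicate hx]
  exact (List.of_mem_zip hp).1

lemma Lof_cons (x y : ℕ) (A B : List ℕ) :
    Lof (x :: A) (y :: B) = List.replicate y x ++ Lof A B := by
  simp [Lof]

lemma sorted_Lof {A : List ℕ} (B : List ℕ) (h : A.Pairwise (· ≥ ·)) :
    (Lof A B).Pairwise (· ≥ ·) := by
  induction A generalizing B with
  | nil => simp [Lof]
  | cons x A ih =>
    cases B with
    | nil => simp [Lof]
    | cons y B =>
      rw [List.pairwise_cons] at h
      rw [Lof_cons, List.pairwise_append]
      refine ⟨List.pairwise_replicate.2 (Or.inr le_rfl), ih _ h.2, ?_⟩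
      intro u hu v hv
      rw [List.eq_of_mem_replicate hu]
      exact h.1 v (mem_Lof hv)

lemma length_Lof {A B : List ℕ} (h : A.length = B.length) : (Lof A B).length = B.sum := by
  induction A generalizing B with
  | nil => cases B with
    | nil => simp [Lof]
    | cons y B => simp at h
  | cons x A ih =>
    cases B with
    | nil => simp at h
    | cons y B =>
      simp only [List.length_cons, Nat.succ_inj] at h
      rw [Lof_cons, List.length_append, List.length_replicate, ih h, List.sum_cons]

lemma getD_le_head (L : List ℕ) (hs : L.Pairwise (· ≥ ·)) (i : ℕ) :
    L.getD i 0 ≤ L.getD 0 0 := by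
  rcases Nat.lt_or_ge i L.length with hi | hi
  · rcases Nat.eq_zero_or_pos i with rfl | hpos
    · exact le_rfl
    · have h0 : 0 < L.length := Nat.lt_of_le_of_lt (Nat.zero_le i) hi
      rw [List.getD_eq_getElem L 0 hi, List.getD_eq_getElem L 0 h0]
      exact List.pairwise_iff_getElem.1 hs 0 i h0 hi hpos
  · rw [List.getD_eq_default _ _ hi]; exact Nat.zero_le _

lemma ncard_Iio (n : ℕ) : (Set.Iio n).ncard = n := by
  rw [← Finset.coe_range, Set.ncard_coe_finset, Finset.card_range]

lemma support_eq (L : List ℕ) (hpos : ∀ x ∈ L, 0 < x) :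
    {i : ℕ | 0 < L.getD i 0} = Set.Iio L.length := by
  ext i
  simp only [Set.mem_setOf_eq, Set.mem_Iio]
  constructor
  · intro h
    by_contra hc
    rw [List.getD_eq_default _ _ (Nat.le_of_not_lt hc)] at h
    exact Nat.lt_irrefl 0 h
  · intro h
    rw [List.getD_eq_getElem L 0 h]
    exact hpos _ (List.getElem_mem h)

lemma xiP_list (L : List ℕ) (hpos : ∀ x ∈ L, 0 < x) :
    xiP (fun i => L.getD i 0) = L.getD 0 0 + L.length - 1 := by
  unfold xiP
  rw [support_eq L hpos, ncard_Iio]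

lemma xiP_conj_list (L : List ℕ) (hs : L.Pairwise (· ≥ ·)) :
    xiP (conjP (fun i => L.getD i 0)) = xiP (fun i => L.getD i 0) := by
  set f : ℕ → ℕ := fun i => L.getD i 0 with hf
  have hle : ∀ i, f i ≤ f 0 := getD_le_head L hs
  have hfin : ∀ j : ℕ, {i : ℕ | j < f i}.Finite := by
    intro j
    apply Set.Finite.subset (Set.finite_Iio L.length)
    intro i hi
    simp only [Set.mem_setOf_eq] at hi
    by_contra hc
    rw [show f i = L.getD i 0 from rfl, List.getD_eq_default _ _ (Nat.le_of_not_lt hc)] at hi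
    exact Nat.not_lt_zero j hi
  have hsupp : {j : ℕ | 0 < conjP f j} = Set.Iio (f 0) := by
    ext j
    simp only [Set.mem_setOf_eq, Set.mem_Iio, conjP]
    constructor
    · intro h
      by_contra hc
      have he : {i : ℕ | j < f i} = ∅ := by
        ext i
        simp only [Set.mem_setOf_eq, Set.mem_empty_iff_false, iff_false]
        intro hi
        exact hc (Nat.lt_of_lt_of_le hi (hle i))
      rw [he, Set.ncard_empty] at h
      exact Nat.lt_irrefl 0 h
    · intro h
      exact (Set.ncard_pos (hfin j)).2 ⟨0, h⟩
  have h0 : conjP f 0 = {i : ℕ | 0 < f i}.ncard := rfl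
  unfold xiP
  rw [hsupp, ncard_Iio, h0]
  omega

lemma pairwise_ge_set_sub_one (l : List ℕ) (j : ℕ) (h : l.Pairwise (· > ·)) :
    (l.set j (l.getD j 0 - 1)).Pairwise (· ≥ ·) := by
  rw [List.pairwise_iff_getElem] at h ⊢
  intro i k hi hk hik
  simp only [List.length_set] at hi hk
  rw [List.getElem_set, List.getElem_set]
  split_ifs with h1 h2 h2
  · omega
  · subst h1
    have hg := List.getD_eq_getElem l 0 hi
    have := h j k hi hk hik
    omega
  · subst h2
    have hg := List.getD_eq_getElem l 0 hk
    have := h i j hi hk hik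
    omega
  · exact Nat.le_of_lt (h i k hi hk hik)

lemma sum_set_add (l : List ℕ) (i v : ℕ) (h : i < l.length) :
    (l.set i v).sum + l.getD i 0 = l.sum + v := by
  induction l generalizing i with
  | nil => simp at h
  | cons x l ih =>
    cases i with
    | zero => simp [List.sum_cons]; omega
    | succ n =>
      simp only [List.set_cons_succ, List.sum_cons, List.getD_cons_succ]
      have := ih n (by simpa using h)
      omega

lemma xiP_rectsP (A B : List ℕ) (hlen : A.length = B.length)
    (hpos : ∀ x ∈ A, 0 < x) (hsort : A.Pairwise (· ≥ ·)) (hB0 : 0 < B.headI) :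
    xiP (rectsP A B) = A.headI + B.sum - 1 ∧
    xiP (conjP (rectsP A B)) = xiP (rectsP A B) := by
  have hLpos : ∀ x ∈ Lof A B, 0 < x := fun x hx => hpos x (mem_Lof hx)
  have hLs := sorted_Lof B hsort
  have hhead : (Lof A B).getD 0 0 = A.headI := by
    cases A with
    | nil =>
      cases B with
      | nil => simp [Lof]
      | cons y B => simp at hlen
    | cons x A =>
      cases B with
      | nil => simp at hB0
      | cons y B =>
        simp only [List.headI] at hB0 ⊢
        rw [Lof_cons]
        cases y with
        | zero => exact absurd hB0 (Nat.lt_irrefl 0)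
        | succ n => simp [List.replicate_succ]
  constructor
  · rw [rectsP_eq, xiP_list _ hLpos, hhead, length_Lof hlen]
  · rw [rectsP_eq]
    exact xiP_conj_list _ hLs

lemma rectsP_cons_zero (x : ℕ) (A B : List ℕ) :
    rectsP (x :: A) (0 :: B) = rectsP A B := by
  rw [rectsP_eq, rectsP_eq, Lof_cons]
  simp

lemma getD_set_ne (l : List ℕ) (i j v : ℕ) (hij : i ≠ j) (hj : j < l.length) :
    (l.set i v).getD j 0 = l.getD j 0 := by
  rw [List.getD_eq_getElem _ 0 (by simpa using hj), List.getD_eq_getElem _ 0 hj,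
    List.getElem_set, if_neg hij]

lemma xi_both (s a0 a1 b1 : ℕ) (att btt : List ℕ)
    (hatt : att.length = s + 1) (hbtt : btt.length = s + 1)
    (hpa : (a0::a1::att).Pairwise (· > ·))
    (hap : ∀ x ∈ (a0::a1::att), 0 < x)
    (hbp : ∀ x ∈ (1::b1::btt), 0 < x)
    (har : 1 < (a0::a1::att).getD (s+2) 0) :
    xiP (hookRemove (a0::a1::att) (1::b1::btt) 0) = a1 + (b1 + btt.sum) - 1 ∧
    xiP (hookRemove (a0::a1::att) (1::b1::btt) (s+1)) = a0 + (b1 + btt.sum) ∧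
    xiP (conjP (hookRemove (a0::a1::att) (1::b1::btt) 0))
      = xiP (hookRemove (a0::a1::att) (1::b1::btt) 0) ∧
    xiP (conjP (hookRemove (a0::a1::att) (1::b1::btt) (s+1)))
      = xiP (hookRemove (a0::a1::att) (1::b1::btt) (s+1)) ∧
    xiP (hookRemove (a0::a1::att) (1::b1::btt) 0)
      < xiP (hookRemove (a0::a1::att) (1::b1::btt) (s+1)) := by
  have hpa1 : (a1::att).Pairwise (· > ·) := (List.pairwise_cons.1 hpa).2
  have ha01 : a0 > a1 := (List.pairwise_cons.1 hpa).1 a1 (by simp)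
  -- a1 > 1
  have hgd : (a0::a1::att).getD (s+2) 0 = att.getD s 0 := by
    simp [List.getD_cons_succ]
  have hsl : s < att.length := by omega
  have hmem : att.getD s 0 ∈ att := by
    rw [List.getD_eq_getElem att 0 hsl]; exact List.getElem_mem hsl
  have ha1 : 1 < a1 := by
    have := (List.pairwise_cons.1 hpa1).1 _ hmem
    omega
  -- case i = 0
  have e1 : hookRemove (a0::a1::att) (1::b1::btt) 0
      = rectsP ((a1-1)::att) ((b1+1)::btt) := by
    show rectsP (((a0::a1::att)).set 1 ((a0::a1::att).getD 1 0 - 1))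
      ((((1::b1::btt)).set 0 ((1::b1::btt).getD 0 0 - 1)).set 1 ((1::b1::btt).getD 1 0 + 1)) = _
    simp only [List.getD_cons_succ, List.getD_cons_zero, List.set_cons_succ, List.set_cons_zero]
    exact rectsP_cons_zero a0 _ _
  have hsort1 : ((a1-1)::att).Pairwise (· ≥ ·) := by
    have := pairwise_ge_set_sub_one (a1::att) 0 hpa1
    simpa using this
  have hpos1 : ∀ x ∈ ((a1-1)::att), 0 < x := by
    intro x hx
    rcases List.mem_cons.1 hx with rfl | hx
    · omega
    · exact hap x (by simp [hx])
  have hx1 := xiP_rectsP ((a1-1)::att) ((b1+1)::btt) (by simp [hatt, hbtt])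
    hpos1 hsort1 (by simp)
  -- case i = s+1
  set A2 := (a0::a1::att).set (s+2) ((a0::a1::att).getD (s+2) 0 - 1) with hA2
  set B2 := (((1::b1::btt)).set (s+1) ((1::b1::btt).getD (s+1) 0 - 1)).set (s+2)
      ((1::b1::btt).getD (s+2) 0 + 1) with hB2
  have e2 : hookRemove (a0::a1::att) (1::b1::btt) (s+1) = rectsP A2 B2 := rfl
  have hsort2 : A2.Pairwise (· ≥ ·) := pairwise_ge_set_sub_one _ _ hpa
  have hpos2 : ∀ x ∈ A2, 0 < x := by
    intro x hx
    rcases List.mem_or_eq_of_mem_set hx with hx | rfl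
    · exact hap x hx
    · omega
  have hlen2 : A2.length = B2.length := by simp [hA2, hB2, hatt, hbtt]
  have hA2h : A2.headI = a0 := by
    rw [hA2]; rfl
  have hB2h : B2.headI = 1 := by
    rw [hB2]; rfl
  have hB2sum : B2.sum = 1 + (b1 + btt.sum) := by
    have hl : (1::b1::btt).length = s + 3 := by simp [hbtt]
    have h1 : s + 1 < (1::b1::btt).length := by omega
    have hs1 := sum_set_add (1::b1::btt) (s+1) ((1::b1::btt).getD (s+1) 0 - 1) h1
    have h2 : s + 2 < (((1::b1::btt)).set (s+1) ((1::b1::btt).getD (s+1) 0 - 1)).length := by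
      rw [List.length_set]; omega
    have hs2 := sum_set_add _ (s+2) ((1::b1::btt).getD (s+2) 0 + 1) h2
    have hne : (((1::b1::btt)).set (s+1) ((1::b1::btt).getD (s+1) 0 - 1)).getD (s+2) 0
        = (1::b1::btt).getD (s+2) 0 :=
      getD_set_ne _ _ _ _ (by omega) (by omega)
    have hpos : 0 < (1::b1::btt).getD (s+1) 0 := by
      have : (1::b1::btt).getD (s+1) 0 ∈ (1::b1::btt) := by
        rw [List.getD_eq_getElem _ 0 (by omega : s+1 < (1::b1::btt).length)]
        exact List.getElem_mem _
      exact hbp _ this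
    have hsum : (1::b1::btt).sum = 1 + (b1 + btt.sum) := by simp [List.sum_cons]
    rw [← hB2] at hs2
    rw [hne] at hs2
    omega
  have hx2 := xiP_rectsP A2 B2 hlen2 hpos2 hsort2 (by rw [hB2h]; omega)
  refine ⟨?_, ?_, ?_, ?_, ?_⟩
  · rw [e1, hx1.1]
    simp only [List.headI, List.sum_cons]
    omega
  · rw [e2, hx2.1, hA2h, hB2sum]
    omega
  · rw [e1]; exact hx1.2
  · rw [e2]; exact hx2.2
  · rw [e1, e2, hx1.1, hx2.1, hA2h, hB2sum]
    simp only [List.headI, List.sum_cons]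
    omega

/-- for canonical `λ = (a_1^{b_1},…,a_r^{b_r})` and
`μ = (a'_1^{b'_1},…,a'_r^{b'_r})` with `r > 2`, `b_1 = b'_1 = 1` and
`a_r, a'_r > 1`, one has `ξ(λ^1) < ξ(λ^{r−1})` (and similarly for `μ`); and it is
impossible that simultaneously (`λ^1 = μ^{r−1}` or `(λ^1)^T = μ^{r−1}`) and
(`λ^{r−1} = μ^1` or `(λ^{r−1})^T = μ^1`). -/
theorem xi_obstruction (r : ℕ) (a b a' b' : List ℕ) (hr : 2 < r)
    (ha : a.length = r) (hb : b.length = r) (ha' : a'.length = r) (hb' : b'.length = r)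
    (hch : a.Chain' (· > ·)) (hch' : a'.Chain' (· > ·))
    (hap : ∀ x ∈ a, 0 < x) (hbp : ∀ x ∈ b, 0 < x)
    (hap' : ∀ x ∈ a', 0 < x) (hbp' : ∀ x ∈ b', 0 < x)
    (hb1 : b.headI = 1) (hb1' : b'.headI = 1)
    (har : 1 < a.getD (r - 1) 0) (har' : 1 < a'.getD (r - 1) 0) :
    xiP (hookRemove a b 0) < xiP (hookRemove a b (r - 2)) ∧
    xiP (hookRemove a' b' 0) < xiP (hookRemove a' b' (r - 2)) ∧
    ¬ ((hookRemove a b 0 = hookRemove a' b' (r - 2) ∨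
          conjP (hookRemove a b 0) = hookRemove a' b' (r - 2)) ∧
       (hookRemove a b (r - 2) = hookRemove a' b' 0 ∨
          conjP (hookRemove a b (r - 2)) = hookRemove a' b' 0)) := by
  obtain ⟨s, rfl⟩ : ∃ s, r = s + 3 := ⟨r - 3, by omega⟩
  simp only [show s + 3 - 2 = s + 1 from by omega, show s + 3 - 1 = s + 2 from by omega] at *
  rcases a with _ | ⟨a0, _ | ⟨a1, att⟩⟩
  · simp at ha
  · simp at ha
  rcases b with _ | ⟨b0, _ | ⟨bb1, btt⟩⟩
  · simp at hb
  · simp at hb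
  rcases a' with _ | ⟨c0, _ | ⟨c1, ctt⟩⟩
  · simp at ha'
  · simp at ha'
  rcases b' with _ | ⟨d0, _ | ⟨dd1, dtt⟩⟩
  · simp at hb'
  · simp at hb'
  simp only [List.headI] at hb1 hb1'
  subst hb1 hb1'
  simp only [List.length_cons] at ha hb ha' hb'
  have hatt : att.length = s + 1 := by omega
  have hbtt : btt.length = s + 1 := by omega
  have hctt : ctt.length = s + 1 := by omega
  have hdtt : dtt.length = s + 1 := by omega
  have hpa : (a0::a1::att).Pairwise (· > ·) := List.isChain_iff_pairwise.1 hch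
  have hpc : (c0::c1::ctt).Pairwise (· > ·) := List.isChain_iff_pairwise.1 hch'
  obtain ⟨X1, X2, C1, C2, XL⟩ := xi_both s a0 a1 bb1 att btt hatt hbtt hpa hap hbp har
  obtain ⟨Y1, Y2, D1, D2, YL⟩ := xi_both s c0 c1 dd1 ctt dtt hctt hdtt hpc hap' hbp' har'
  refine ⟨XL, YL, ?_⟩
  rintro ⟨H1, H2⟩
  have E1 : xiP (hookRemove (a0::a1::att) (1::bb1::btt) 0)
      = xiP (hookRemove (c0::c1::ctt) (1::dd1::dtt) (s+1)) := by
    rcases H1 with h | h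
    · rw [h]
    · rw [← h]; exact C1.symm
  have E2 : xiP (hookRemove (a0::a1::att) (1::bb1::btt) (s+1))
      = xiP (hookRemove (c0::c1::ctt) (1::dd1::dtt) 0) := by
    rcases H2 with h | h
    · rw [h]
    · rw [← h]; exact C2.symm
  omega
end

section
/- Let θ be a skew diagram with connected components θ^1, …, θ^s, and θ′ a skew diagram with connected components θ′^1, …, θ′^t. Then the posets P(θ) and P(θ′) are semi-isomorphic (there is a bijection between connected components such that corresponding components are isomorphic or opposite) if and only if s = t and there is a permutation σ such that for each i, θ^i = θ′^{σ(i)}, or (θ^i)^T = θ′^{σ(i)}, or (θ^i)† = θ′^{σ(i)}, or ((θ^i)^T)† = θ′^{σ(i)} (as translation classes of skew diagrams), where † denotes 180-degree rotation. -/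
/-- 180-degree rotation of a cell (about the origin; combined with translations
this gives all 180-degree rotations). -/
def rotCell (c : Cell) : Cell := (-c.1, -c.2)

/-- Equality of diagrams up to translation. -/
def TranslateEq (S T : Finset Cell) : Prop := ∃ v : Cell, T = S.image (· + v)

/-- Two cells of `S` lie in the same connected component of the skew diagram `S`
iff they are joined by a path of adjacent cells of `S`. -/
def sameComp (S : Finset Cell) (x y : Cell) : Prop :=
  Relation.ReflTransGen (fun u v => u ∈ S ∧ v ∈ S ∧ CellAdj u v) x y

/-- The connectedness relation of a poset: joined by a zigzag of comparabilities. -/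
def zigzagRel {α : Type*} [Preorder α] (x y : α) : Prop :=
  Relation.ReflTransGen (fun u v : α => u ≤ v ∨ v ≤ u) x y

/-- Two posets are semi-isomorphic if there is a bijection between their sets of
connected components such that corresponding components (with the induced order)
are isomorphic or opposite. -/
def SemiIso (α β : Type*) [Preorder α] [Preorder β] : Prop :=
  ∃ f : {s : Set α // ∃ a : α, s = {b | zigzagRel a b}} ≃
        {t : Set β // ∃ c : β, t = {d | zigzagRel c d}},
    ∀ s : {s : Set α // ∃ a : α, s = {b | zigzagRel a b}}, Nonempty (↥s.1 ≃o ↥(f s).1) ∨ Nonempty (↥s.1 ≃o (↥(f s).1)ᵒᵈ)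

-- batch 1: basic lemmas
section Basics

lemma cellAdj_symm {a b : Cell} (h : CellAdj a b) : CellAdj b a := by
  unfold CellAdj at *; tauto

lemma cellAdj_comparable {a b : Cell} (h : CellAdj a b) : a ≤ b ∨ b ≤ a := by
  obtain ⟨a1, a2⟩ := a; obtain ⟨b1, b2⟩ := b
  simp only [CellAdj, Prod.le_def] at *
  omega

lemma sameComp_symm {S : Finset Cell} {x y : Cell} (h : sameComp S x y) : sameComp S y x :=
  (@Relation.ReflTransGen.stdSymm _ _ ⟨fun _ _ h => ⟨h.2.1, h.1, cellAdj_symm h.2.2⟩⟩).symm _ _ h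

lemma sameComp_trans {S : Finset Cell} {x y z : Cell} (h : sameComp S x y)
    (h2 : sameComp S y z) : sameComp S x z := Relation.ReflTransGen.trans h h2

lemma sameComp_mem_right {S : Finset Cell} {x y : Cell} (hx : x ∈ S) (h : sameComp S x y) :
    y ∈ S := by
  induction h with
  | refl => exact hx
  | tail _ h ih => exact h.2.1

/-- comparable cells of a skew diagram are in the same component -/
lemma sameComp_of_le {S : Finset Cell} (hS : IsSkewDiagram S) :
    ∀ n : ℕ, ∀ x y : Cell, x ∈ S → y ∈ S → x ≤ y → (y.1 - x.1 + (y.2 - x.2)).toNat = n →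
      sameComp S x y := by
  intro n
  induction n with
  | zero =>
    intro x y hx hy hle hn
    obtain ⟨x1,x2⟩ := x; obtain ⟨y1,y2⟩ := y
    simp only [Prod.le_def] at hle
    have : x1 = y1 ∧ x2 = y2 := by omega
    obtain ⟨rfl, rfl⟩ := this
    exact Relation.ReflTransGen.refl
  | succ n ih =>
    intro x y hx hy hle hn
    obtain ⟨x1,x2⟩ := x; obtain ⟨y1,y2⟩ := y
    simp only [Prod.le_def] at hle
    by_cases h1 : x1 < y1
    · have hm : ((x1+1, x2) : Cell) ∈ S := hS _ _ _ hx hy (by simp [Prod.le_def]) (by simp [Prod.le_def]; omega)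
      refine Relation.ReflTransGen.head ⟨hx, hm, ?_⟩ (ih _ _ hm hy (by simp [Prod.le_def]; omega) (by simp; omega))
      right; constructor; rfl; right; rfl
    · have h2 : x2 < y2 := by omega
      have hm : ((x1, x2+1) : Cell) ∈ S := hS _ _ _ hx hy (by simp [Prod.le_def]) (by simp [Prod.le_def]; omega)
      refine Relation.ReflTransGen.head ⟨hx, hm, ?_⟩ (ih _ _ hm hy (by simp [Prod.le_def]; omega) (by simp; omega))
      left; constructor; rfl; right; rfl

lemma sameComp_of_le' {S : Finset Cell} (hS : IsSkewDiagram S) {x y : Cell}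
    (hx : x ∈ S) (hy : y ∈ S) (hle : x ≤ y) : sameComp S x y :=
  sameComp_of_le hS _ x y hx hy hle rfl

end Basics

section Zigzag

variable {S : Finset Cell}

lemma zigzag_symm {α : Type*} [Preorder α] {a b : α} (h : zigzagRel a b) : zigzagRel b a :=
  (@Relation.ReflTransGen.stdSymm _ _ ⟨fun _ _ h => h.symm⟩).symm _ _ h

lemma zigzag_trans {α : Type*} [Preorder α] {a b c : α} (h : zigzagRel a b)
    (h2 : zigzagRel b c) : zigzagRel a c := Relation.ReflTransGen.trans h h2

lemma class_eq_of_zigzag {α : Type*} [Preorder α] {a b : α} (h : zigzagRel a b) :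
    {x | zigzagRel a x} = {x | zigzagRel b x} := by
  ext x; exact ⟨fun hx => zigzag_trans (zigzag_symm h) hx, fun hx => zigzag_trans h hx⟩

lemma zigzag_iff_sameComp (hS : IsSkewDiagram S) (a b : {x : Cell // x ∈ S}) :
    zigzagRel a b ↔ sameComp S a.1 b.1 := by
  constructor
  · intro h
    induction h with
    | refl => exact Relation.ReflTransGen.refl
    | tail _ h ih =>
      rename_i u v _
      refine sameComp_trans ih ?_
      rcases h with h | h
      · exact sameComp_of_le' hS u.2 v.2 h
      · exact sameComp_symm (sameComp_of_le' hS v.2 u.2 h)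
  · intro h
    obtain ⟨a, ha⟩ := a; obtain ⟨b, hb⟩ := b
    simp only at h
    induction h with
    | refl => exact Relation.ReflTransGen.refl
    | tail _ h ih =>
      rename_i u v _
      refine zigzag_trans (ih h.1) (Relation.ReflTransGen.single ?_)
      have := cellAdj_comparable h.2.2
      rcases this with h' | h'
      · exact Or.inl h'
      · exact Or.inr h'

end Zigzag

section Images

lemma rot_rot (c : Cell) : rotCell (rotCell c) = c := by simp [rotCell]

lemma trans_trans (c : Cell) : transposeCell (transposeCell c) = c := by simp [transposeCell]

lemma rot_le_rot {a b : Cell} : rotCell a ≤ rotCell b ↔ b ≤ a := by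
  obtain ⟨a1,a2⟩ := a; obtain ⟨b1,b2⟩ := b
  simp only [rotCell, Prod.le_def]
  omega

lemma transpose_le_transpose {a b : Cell} : transposeCell a ≤ transposeCell b ↔ a ≤ b := by
  obtain ⟨a1,a2⟩ := a; obtain ⟨b1,b2⟩ := b
  simp only [transposeCell, Prod.le_def]
  omega

lemma mem_image_rot {A : Finset Cell} {x : Cell} : x ∈ A.image rotCell ↔ rotCell x ∈ A := by
  simp only [Finset.mem_image]
  constructor
  · rintro ⟨a, ha, rfl⟩; rwa [rot_rot]
  · intro h; exact ⟨rotCell x, h, rot_rot x⟩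

lemma isSkew_image_rot {A : Finset Cell} (hA : IsSkewDiagram A) :
    IsSkewDiagram (A.image rotCell) := by
  intro a b x ha hb hax hxb
  rw [mem_image_rot] at *
  exact hA _ _ _ hb ha (rot_le_rot.2 hxb) (rot_le_rot.2 hax)

lemma cellAdj_rot {a b : Cell} (h : CellAdj a b) : CellAdj (rotCell a) (rotCell b) := by
  obtain ⟨a1,a2⟩ := a; obtain ⟨b1,b2⟩ := b
  simp only [CellAdj, rotCell] at *
  omega

lemma cellAdj_transpose {a b : Cell} (h : CellAdj a b) :
    CellAdj (transposeCell a) (transposeCell b) := by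
  obtain ⟨a1,a2⟩ := a; obtain ⟨b1,b2⟩ := b
  simp only [CellAdj, transposeCell] at *; tauto

lemma sameComp_image_rot {A : Finset Cell} {x y : Cell} (h : sameComp A x y) :
    sameComp (A.image rotCell) (rotCell x) (rotCell y) := by
  refine Relation.ReflTransGen.lift rotCell (fun a b hab => ?_) _ _ h
  exact ⟨mem_image_rot.2 (by rw [rot_rot]; exact hab.1),
    mem_image_rot.2 (by rw [rot_rot]; exact hab.2.1), cellAdj_rot hab.2.2⟩

lemma image_rot_nonempty {A : Finset Cell} (h : A.Nonempty) : (A.image rotCell).Nonempty :=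
  h.image _

lemma image_trans_rot_comm (A : Finset Cell) :
    (A.image rotCell).image transposeCell = (A.image transposeCell).image rotCell := by
  rw [Finset.image_image, Finset.image_image]
  congr 1

end Images

section Rigidity

/-- An edge of the diagram: `b` is the right or down neighbour of `a`. -/
def Edge {A : Finset Cell} (a b : {x : Cell // x ∈ A}) : Prop :=
  b.1 = a.1 + ((1:ℤ),(0:ℤ)) ∨ b.1 = a.1 + ((0:ℤ),(1:ℤ))

/-- The edge `(a,b)` is type-preserved by `φ`. -/
def Pres {A B : Finset Cell} (φ : {x : Cell // x ∈ A} ≃o {x : Cell // x ∈ B})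
    (a b : {x : Cell // x ∈ A}) : Prop :=
  (φ b).1 = (φ a).1 + (b.1 - a.1)

lemma cell_exists_between {p q : Cell} (hle : p ≤ q) (h0 : q ≠ p)
    (h1 : q ≠ p + ((1:ℤ),(0:ℤ))) (h2 : q ≠ p + ((0:ℤ),(1:ℤ))) :
    ∃ m : Cell, p < m ∧ m < q := by
  obtain ⟨p1,p2⟩ := p; obtain ⟨q1,q2⟩ := q
  simp only [Prod.le_def, Prod.ext_iff, Prod.mk_add_mk, ne_eq, Prod.mk.injEq, not_and_or] at *
  by_cases hc : p1 < q1
  · refine ⟨(p1+1, p2), ?_, ?_⟩ <;> (simp only [Prod.mk_lt_mk]; omega)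
  · refine ⟨(p1, p2+1), ?_, ?_⟩ <;> (simp only [Prod.mk_lt_mk]; omega)

lemma edge_lt {A : Finset Cell} {x y : {c : Cell // c ∈ A}} (h : Edge x y) : x < y := by
  rw [← Subtype.coe_lt_coe]
  obtain ⟨⟨x1,x2⟩,hx⟩ := x; obtain ⟨⟨y1,y2⟩,hy⟩ := y
  simp only [Edge, Prod.mk_add_mk, Prod.mk.injEq] at h
  simp only [Prod.lt_iff]
  omega

/-- The image of an edge under an order isomorphism into a skew diagram is an edge. -/
lemma step_unit {A B : Finset Cell} (hB : IsSkewDiagram B)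
    (φ : {x : Cell // x ∈ A} ≃o {x : Cell // x ∈ B})
    {x y : {c : Cell // c ∈ A}} (h : Edge x y) : Edge (φ x) (φ y) := by
  have hxy : φ x < φ y := φ.lt_iff_lt.2 (edge_lt h)
  have hle : (φ x).1 ≤ (φ y).1 := Subtype.coe_le_coe.2 hxy.le
  have hne : (φ y).1 ≠ (φ x).1 := fun hc => hxy.ne' (Subtype.ext hc)
  by_contra hcon
  simp only [Edge, not_or] at hcon
  obtain ⟨m, hm1, hm2⟩ := cell_exists_between hle hne hcon.1 hcon.2
  have hmB : m ∈ B := hB _ _ _ (φ x).2 (φ y).2 hm1.le hm2.le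
  set z := φ.symm ⟨m, hmB⟩ with hz
  have hφz : φ z = ⟨m, hmB⟩ := φ.apply_symm_apply _
  have hxz : x < z := by
    rw [← φ.lt_iff_lt, hφz, ← Subtype.coe_lt_coe]; exact hm1
  have hzy : z < y := by
    rw [← φ.lt_iff_lt, hφz, ← Subtype.coe_lt_coe]; exact hm2
  rw [← Subtype.coe_lt_coe] at hxz hzy
  rcases h with h | h <;>
  · rw [h] at hzy
    rw [Prod.lt_iff] at hxz hzy
    simp only [Prod.fst_add, Prod.snd_add] at hzy
    omega

/-- Edges out of a given cell get their types preserved or swapped together. -/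
lemma pres_out_out {A B : Finset Cell} (hB : IsSkewDiagram B)
    (φ : {x : Cell // x ∈ A} ≃o {x : Cell // x ∈ B})
    {x y y' : {c : Cell // c ∈ A}} (h : Edge x y) (h' : Edge x y') :
    (Pres φ x y ↔ Pres φ x y') := by
  by_cases hyy : y = y'
  · rw [hyy]
  · have hu := step_unit hB φ h
    have hu' := step_unit hB φ h'
    have hne2 : (φ y).1 ≠ (φ y').1 := by
      intro hc
      exact hyy (φ.injective (Subtype.ext hc))
    have hne1 : y.1 ≠ y'.1 := fun hc => hyy (Subtype.ext hc)
    simp only [Edge, Pres, Prod.ext_iff, Prod.fst_add, Prod.snd_add, Prod.fst_sub,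
      Prod.snd_sub, ne_eq, Prod.fst_one, Prod.snd_one, Prod.fst_zero, Prod.snd_zero]
      at h h' hu hu' hne1 hne2 ⊢
    omega

/-- Edges into a given cell get their types preserved or swapped together. -/
lemma pres_in_in {A B : Finset Cell} (hB : IsSkewDiagram B)
    (φ : {x : Cell // x ∈ A} ≃o {x : Cell // x ∈ B})
    {x x' y : {c : Cell // c ∈ A}} (h : Edge x y) (h' : Edge x' y) :
    (Pres φ x y ↔ Pres φ x' y) := by
  by_cases hxx : x = x'
  · rw [hxx]
  · have hu := step_unit hB φ h
    have hu' := step_unit hB φ h'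
    have hne2 : (φ x).1 ≠ (φ x').1 := by
      intro hc
      exact hxx (φ.injective (Subtype.ext hc))
    have hne1 : x.1 ≠ x'.1 := fun hc => hxx (Subtype.ext hc)
    simp only [Edge, Pres, Prod.ext_iff, Prod.fst_add, Prod.snd_add, Prod.fst_sub,
      Prod.snd_sub, ne_eq] at h h' hu hu' hne1 hne2 ⊢
    omega

end Rigidity

section Chain

variable {A B : Finset Cell} {φ : {x : Cell // x ∈ A} ≃o {x : Cell // x ∈ B}}

/-- If `x→y→z` is a straight chain, its image cannot be a turn. -/
lemma chain_not_turn (hB : IsSkewDiagram B)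
    {x y z : {c : Cell // c ∈ A}} (h1 : Edge x y) (h2 : Edge y z)
    (hchain : z.1 - y.1 = y.1 - x.1)
    (hturn' : (φ z).1 - (φ y).1 ≠ (φ y).1 - (φ x).1) : False := by
  have hu1 := step_unit hB φ h1
  have hu2 := step_unit hB φ h2
  -- the image is a genuine turn
  have hdiag : (φ z).1 = (φ x).1 + ((1:ℤ),(1:ℤ)) := by
    rcases hu1 with hu1 | hu1 <;> rcases hu2 with hu2 | hu2 <;>
      simp only [Prod.ext_iff, Prod.fst_add, Prod.snd_add, Prod.fst_sub, Prod.snd_sub,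
        ne_eq] at hu1 hu2 hturn' ⊢ <;> omega
  have hm1B : (φ x).1 + ((1:ℤ),(0:ℤ)) ∈ B := by
    refine hB _ _ _ (φ x).2 (φ z).2 ?_ ?_ <;>
      simp only [hdiag, Prod.le_def, Prod.fst_add, Prod.snd_add] <;> omega
  have hm2B : (φ x).1 + ((0:ℤ),(1:ℤ)) ∈ B := by
    refine hB _ _ _ (φ x).2 (φ z).2 ?_ ?_ <;>
      simp only [hdiag, Prod.le_def, Prod.fst_add, Prod.snd_add] <;> omega
  set z1 := φ.symm ⟨_, hm1B⟩ with hz1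
  set z2 := φ.symm ⟨_, hm2B⟩ with hz2
  have hφz1 : φ z1 = ⟨_, hm1B⟩ := φ.apply_symm_apply _
  have hφz2 : φ z2 = ⟨_, hm2B⟩ := φ.apply_symm_apply _
  have hx1 : x < z1 := by
    rw [← φ.lt_iff_lt, hφz1, ← Subtype.coe_lt_coe, Prod.lt_iff]
    simp only [Prod.fst_add, Prod.snd_add]; omega
  have hx2 : x < z2 := by
    rw [← φ.lt_iff_lt, hφz2, ← Subtype.coe_lt_coe, Prod.lt_iff]
    simp only [Prod.fst_add, Prod.snd_add]; omega
  have h1z : z1 < z := by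
    rw [← φ.lt_iff_lt, hφz1, ← Subtype.coe_lt_coe, hdiag, Prod.lt_iff]
    simp only [Prod.fst_add, Prod.snd_add]; omega
  have h2z : z2 < z := by
    rw [← φ.lt_iff_lt, hφz2, ← Subtype.coe_lt_coe, hdiag, Prod.lt_iff]
    simp only [Prod.fst_add, Prod.snd_add]; omega
  rw [← Subtype.coe_lt_coe, Prod.lt_iff] at hx1 hx2 h1z h2z
  have hz12 : z1.1 = z2.1 := by
    rcases h1 with h1 | h1 <;>
    · have hz' : z.1 = x.1 + (y.1 - x.1) + (y.1 - x.1) := by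
        simp only [Prod.ext_iff, Prod.fst_add, Prod.snd_add, Prod.fst_sub, Prod.snd_sub] at *
        omega
      rw [h1] at hz'
      rw [hz'] at h1z h2z
      simp only [h1, Prod.ext_iff, Prod.fst_add, Prod.snd_add, Prod.fst_sub, Prod.snd_sub]
        at h1z h2z ⊢
      omega
  have heq : z1 = z2 := Subtype.ext hz12
  rw [hz1, hz2] at heq
  have hmm := congrArg Subtype.val (φ.symm.injective heq)
  simp only [Prod.ext_iff, Prod.fst_add, Prod.snd_add] at hmm
  omega

end Chain

section Chain2

variable {A B : Finset Cell} {φ : {x : Cell // x ∈ A} ≃o {x : Cell // x ∈ B}}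

/-- If `x→y→z` is a turn, its image cannot be a straight chain. -/
lemma turn_not_chain (hA : IsSkewDiagram A) (hB : IsSkewDiagram B)
    {x y z : {c : Cell // c ∈ A}} (h1 : Edge x y) (h2 : Edge y z)
    (hturn : z.1 - y.1 ≠ y.1 - x.1)
    (hchain' : (φ z).1 - (φ y).1 = (φ y).1 - (φ x).1) : False := by
  have hu1 := step_unit hB φ h1
  have hu2 := step_unit hB φ h2
  have hdiag : z.1 = x.1 + ((1:ℤ),(1:ℤ)) := by
    rcases h1 with h1 | h1 <;> rcases h2 with h2 | h2 <;>
      simp only [Prod.ext_iff, Prod.fst_add, Prod.snd_add, Prod.fst_sub, Prod.snd_sub,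
        ne_eq] at h1 h2 hturn ⊢ <;> omega
  have hm1A : x.1 + ((1:ℤ),(0:ℤ)) ∈ A := by
    refine hA _ _ _ x.2 z.2 ?_ ?_ <;>
      simp only [hdiag, Prod.le_def, Prod.fst_add, Prod.snd_add] <;> omega
  have hm2A : x.1 + ((0:ℤ),(1:ℤ)) ∈ A := by
    refine hA _ _ _ x.2 z.2 ?_ ?_ <;>
      simp only [hdiag, Prod.le_def, Prod.fst_add, Prod.snd_add] <;> omega
  have hx1 : x < (⟨_, hm1A⟩ : {c : Cell // c ∈ A}) := by
    rw [← Subtype.coe_lt_coe, Prod.lt_iff]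
    simp only [Prod.fst_add, Prod.snd_add]; omega
  have hx2 : x < (⟨_, hm2A⟩ : {c : Cell // c ∈ A}) := by
    rw [← Subtype.coe_lt_coe, Prod.lt_iff]
    simp only [Prod.fst_add, Prod.snd_add]; omega
  have h1z : (⟨_, hm1A⟩ : {c : Cell // c ∈ A}) < z := by
    rw [← Subtype.coe_lt_coe, hdiag, Prod.lt_iff]
    simp only [Prod.fst_add, Prod.snd_add]; omega
  have h2z : (⟨_, hm2A⟩ : {c : Cell // c ∈ A}) < z := by
    rw [← Subtype.coe_lt_coe, hdiag, Prod.lt_iff]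
    simp only [Prod.fst_add, Prod.snd_add]; omega
  have hb1 : (φ x).1 < (φ ⟨_, hm1A⟩).1 := Subtype.coe_lt_coe.2 (φ.lt_iff_lt.2 hx1)
  have hb2 : (φ x).1 < (φ ⟨_, hm2A⟩).1 := Subtype.coe_lt_coe.2 (φ.lt_iff_lt.2 hx2)
  have hc1 : (φ ⟨_, hm1A⟩).1 < (φ z).1 := Subtype.coe_lt_coe.2 (φ.lt_iff_lt.2 h1z)
  have hc2 : (φ ⟨_, hm2A⟩).1 < (φ z).1 := Subtype.coe_lt_coe.2 (φ.lt_iff_lt.2 h2z)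
  -- the image interval is a chain, so both middles map to the same cell
  have hmm : (φ ⟨_, hm1A⟩).1 = (φ ⟨_, hm2A⟩).1 := by
    rw [Prod.lt_iff] at hb1 hb2 hc1 hc2
    rcases hu1 with hu1 | hu1 <;>
    · have hz' : (φ z).1 = (φ x).1 + ((φ y).1 - (φ x).1) + ((φ y).1 - (φ x).1) := by
        simp only [Prod.ext_iff, Prod.fst_add, Prod.snd_add, Prod.fst_sub, Prod.snd_sub]
          at hchain' ⊢
        constructor <;> omega
      rw [hu1] at hz'
      rw [hz'] at hc1 hc2
      simp only [hu1, Prod.ext_iff, Prod.fst_add, Prod.snd_add, Prod.fst_sub, Prod.snd_sub]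
        at hc1 hc2 ⊢
      omega
  have := congrArg Subtype.val (φ.injective (Subtype.ext hmm))
  simp only [Prod.ext_iff, Prod.fst_add, Prod.snd_add] at this
  omega

/-- Consecutive edges have their types preserved or swapped together. -/
lemma pres_chain (hA : IsSkewDiagram A) (hB : IsSkewDiagram B)
    {x y z : {c : Cell // c ∈ A}} (h1 : Edge x y) (h2 : Edge y z) :
    (Pres φ x y ↔ Pres φ y z) := by
  have hu1 := step_unit hB φ h1
  have hu2 := step_unit hB φ h2
  by_cases hc : z.1 - y.1 = y.1 - x.1
  · have hch : (φ z).1 - (φ y).1 = (φ y).1 - (φ x).1 := by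
      by_contra hcon
      exact chain_not_turn (φ := φ) hB h1 h2 hc hcon
    rcases h1 with e1 | e1 <;> rcases h2 with e2 | e2 <;>
      simp only [Pres, Prod.ext_iff, Prod.fst_add, Prod.snd_add, Prod.fst_sub, Prod.snd_sub,
        ne_eq] at e1 e2 hc hch ⊢ <;> omega
  · have hncontra := fun h => turn_not_chain (φ := φ) hA hB h1 h2 hc h
    rcases hu1 with f1 | f1 <;> rcases hu2 with f2 | f2 <;>
    [ skip;
      (rcases h1 with e1 | e1 <;> rcases h2 with e2 | e2 <;>
        simp only [Pres, Prod.ext_iff, Prod.fst_add, Prod.snd_add, Prod.fst_sub, Prod.snd_sub,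
          ne_eq] at e1 e2 f1 f2 hc ⊢ <;> omega);
      (rcases h1 with e1 | e1 <;> rcases h2 with e2 | e2 <;>
        simp only [Pres, Prod.ext_iff, Prod.fst_add, Prod.snd_add, Prod.fst_sub, Prod.snd_sub,
          ne_eq] at e1 e2 f1 f2 hc ⊢ <;> omega);
      skip] <;>
    · exfalso
      apply hncontra
      simp only [Prod.ext_iff, Prod.fst_add, Prod.snd_add, Prod.fst_sub, Prod.snd_sub] at f1 f2 ⊢
      constructor <;> omega

end Chain2

section Propagate

variable {A B : Finset Cell} {φ : {x : Cell // x ∈ A} ≃o {x : Cell // x ∈ B}}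

lemma cellAdj_cases {a b : Cell} (h : CellAdj a b) :
    b = a + ((1:ℤ),(0:ℤ)) ∨ b = a + ((0:ℤ),(1:ℤ)) ∨
    a = b + ((1:ℤ),(0:ℤ)) ∨ a = b + ((0:ℤ),(1:ℤ)) := by
  obtain ⟨a1,a2⟩ := a; obtain ⟨b1,b2⟩ := b
  simp only [CellAdj, Prod.mk_add_mk, Prod.mk.injEq] at *
  omega

lemma pres_shared (hA : IsSkewDiagram A) (hB : IsSkewDiagram B)
    {a b a' b' : {c : Cell // c ∈ A}} (h : Edge a b) (h' : Edge a' b')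
    (hsh : a = a' ∨ a = b' ∨ b = a' ∨ b = b') : (Pres φ a b ↔ Pres φ a' b') := by
  rcases hsh with rfl | rfl | rfl | rfl
  · exact pres_out_out hB φ h h'
  · exact (pres_chain hA hB h' h).symm
  · exact pres_chain hA hB h h'
  · exact pres_in_in hB φ h h'

lemma pres_path (hA : IsSkewDiagram A) (hB : IsSkewDiagram B)
    {x y : Cell} (hp : sameComp A x y) (a2 b2 : {c : Cell // c ∈ A})
    (h2 : Edge a2 b2) (hy : y = a2.1 ∨ y = b2.1) :
    ∀ a b : {c : Cell // c ∈ A}, Edge a b → (x = a.1 ∨ x = b.1) →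
      (Pres φ a b ↔ Pres φ a2 b2) := by
  induction hp using Relation.ReflTransGen.head_induction_on with
  | refl =>
    intro a b h1 hx
    refine pres_shared hA hB h1 h2 ?_
    rcases hx with hx | hx <;> rcases hy with hy | hy
    · exact Or.inl (Subtype.ext (hx ▸ hy.symm ▸ rfl))
    · exact Or.inr (Or.inl (Subtype.ext (hx ▸ hy.symm ▸ rfl)))
    · exact Or.inr (Or.inr (Or.inl (Subtype.ext (hx ▸ hy.symm ▸ rfl))))
    · exact Or.inr (Or.inr (Or.inr (Subtype.ext (hx ▸ hy.symm ▸ rfl))))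
  | @head u v hstep htail ih =>
    intro a b h1 hx
    obtain ⟨huA, hvA, hadj⟩ := hstep
    rcases cellAdj_cases hadj with hc | hc | hc | hc
    · have hmid : Edge (⟨u, huA⟩ : {c : Cell // c ∈ A}) ⟨v, hvA⟩ := Or.inl hc
      exact (pres_shared hA hB h1 hmid (by
        rcases hx with hx | hx
        · exact Or.inl (Subtype.ext hx.symm)
        · exact Or.inr (Or.inr (Or.inl (Subtype.ext hx.symm))))).trans
        (ih _ _ hmid (Or.inr rfl))
    · have hmid : Edge (⟨u, huA⟩ : {c : Cell // c ∈ A}) ⟨v, hvA⟩ := Or.inr hc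
      exact (pres_shared hA hB h1 hmid (by
        rcases hx with hx | hx
        · exact Or.inl (Subtype.ext hx.symm)
        · exact Or.inr (Or.inr (Or.inl (Subtype.ext hx.symm))))).trans
        (ih _ _ hmid (Or.inr rfl))
    · have hmid : Edge (⟨v, hvA⟩ : {c : Cell // c ∈ A}) ⟨u, huA⟩ := Or.inl hc
      exact (pres_shared hA hB h1 hmid (by
        rcases hx with hx | hx
        · exact Or.inr (Or.inl (Subtype.ext hx.symm))
        · exact Or.inr (Or.inr (Or.inr (Subtype.ext hx.symm))))).trans
        (ih _ _ hmid (Or.inl rfl))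
    · have hmid : Edge (⟨v, hvA⟩ : {c : Cell // c ∈ A}) ⟨u, huA⟩ := Or.inr hc
      exact (pres_shared hA hB h1 hmid (by
        rcases hx with hx | hx
        · exact Or.inr (Or.inl (Subtype.ext hx.symm))
        · exact Or.inr (Or.inr (Or.inr (Subtype.ext hx.symm))))).trans
        (ih _ _ hmid (Or.inl rfl))

end Propagate

section RigidityMain

lemma transpose_sub (a b : Cell) :
    transposeCell (a - b) = transposeCell a - transposeCell b := rfl

/-- Any order isomorphism between connected skew diagrams is a translation,
possibly composed with the transposition. -/
theorem rigidity {A B : Finset Cell} (hA : IsSkewDiagram A) (hB : IsSkewDiagram B)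
    (hconn : ∀ x ∈ A, ∀ y ∈ A, sameComp A x y) (hAne : A.Nonempty)
    (φ : {x : Cell // x ∈ A} ≃o {x : Cell // x ∈ B}) :
    TranslateEq A B ∨ TranslateEq (A.image transposeCell) B := by
  classical
  have hsurj : ∀ b ∈ B, ∃ a : {x : Cell // x ∈ A}, (φ a).1 = b := by
    intro b hb
    exact ⟨φ.symm ⟨b, hb⟩, by rw [φ.apply_symm_apply]⟩
  by_cases hsing : ∀ x ∈ A, ∀ y ∈ A, x = y
  · obtain ⟨a, ha⟩ := hAne
    left
    refine ⟨(φ ⟨a, ha⟩).1 - a, ?_⟩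
    ext b
    simp only [Finset.mem_image]
    constructor
    · intro hb
      obtain ⟨a', ha'⟩ := hsurj b hb
      have : a'.1 = a := hsing _ a'.2 _ ha
      refine ⟨a, ha, ?_⟩
      have h2 : a' = ⟨a, ha⟩ := Subtype.ext this
      rw [h2] at ha'
      rw [← ha']; abel
    · rintro ⟨a', ha', rfl⟩
      have h2 : a' = a := hsing _ ha' _ ha
      subst h2
      have : a' + ((φ ⟨a', ha⟩).1 - a') = (φ ⟨a', ha⟩).1 := by abel
      rw [this]
      exact (φ ⟨a', ha⟩).2
  · push_neg at hsing
    obtain ⟨x0, hx0, y0, hy0, hxy0⟩ := hsing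
    have hpath := hconn x0 hx0 y0 hy0
    rcases Relation.ReflTransGen.cases_head hpath with heq | ⟨m, hstep, -⟩
    · exact absurd heq hxy0
    obtain ⟨hx0', hmA, hadj⟩ := hstep
    -- extract a base edge
    obtain ⟨p, q, h0⟩ : ∃ p q : {c : Cell // c ∈ A}, Edge p q := by
      rcases cellAdj_cases hadj with hc | hc | hc | hc
      · exact ⟨⟨x0, hx0⟩, ⟨m, hmA⟩, Or.inl hc⟩
      · exact ⟨⟨x0, hx0⟩, ⟨m, hmA⟩, Or.inr hc⟩
      · exact ⟨⟨m, hmA⟩, ⟨x0, hx0⟩, Or.inl hc⟩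
      · exact ⟨⟨m, hmA⟩, ⟨x0, hx0⟩, Or.inr hc⟩
    have hall : ∀ a b : {c : Cell // c ∈ A}, Edge a b → (Pres φ a b ↔ Pres φ p q) :=
      fun a b h => pres_path hA hB (hconn a.1 a.2 p.1 p.2) p q h0 (Or.inl rfl) a b h
        (Or.inl rfl)
    by_cases hpres : Pres φ p q
    · -- every edge is preserved: φ is a translation
      have hstepd : ∀ a b : {c : Cell // c ∈ A}, Edge a b →
          (φ b).1 - b.1 = (φ a).1 - a.1 := by
        intro a b h
        have := (hall a b h).2 hpres
        rw [Pres] at this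
        rw [this]; abel
      have hconst : ∀ x : Cell, ∀ hx : x ∈ A, ∀ y : Cell, sameComp A x y →
          ∀ hy : y ∈ A, (φ ⟨y, hy⟩).1 - y = (φ ⟨x, hx⟩).1 - x := by
        intro x hx y hp
        induction hp with
        | refl => intro hy; rfl
        | @tail u v hp hstep ih =>
          intro hv
          obtain ⟨huA, hvA, hadj⟩ := hstep
          have ihu := ih huA
          rcases cellAdj_cases hadj with hc | hc | hc | hc
          · rw [← ihu]; exact hstepd ⟨u, huA⟩ ⟨v, hvA⟩ (Or.inl hc)
          · rw [← ihu]; exact hstepd ⟨u, huA⟩ ⟨v, hvA⟩ (Or.inr hc)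
          · rw [← ihu]; exact (hstepd ⟨v, hvA⟩ ⟨u, huA⟩ (Or.inl hc)).symm
          · rw [← ihu]; exact (hstepd ⟨v, hvA⟩ ⟨u, huA⟩ (Or.inr hc)).symm
      left
      refine ⟨(φ ⟨x0, hx0⟩).1 - x0, ?_⟩
      ext b
      simp only [Finset.mem_image]
      constructor
      · intro hb
        obtain ⟨a', ha'⟩ := hsurj b hb
        refine ⟨a'.1, a'.2, ?_⟩
        have := hconst x0 hx0 a'.1 (hconn x0 hx0 a'.1 a'.2) a'.2
        rw [← this, ← ha']
        abel
      · rintro ⟨a', ha', rfl⟩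
        have := hconst x0 hx0 a' (hconn x0 hx0 a' ha') ha'
        have h2 : a' + ((φ ⟨x0, hx0⟩).1 - x0) = (φ ⟨a', ha'⟩).1 := by
          rw [← this]; abel
        rw [h2]
        exact (φ ⟨a', ha'⟩).2
    · -- every edge is swapped: φ is a transposition followed by a translation
      have hstepd : ∀ a b : {c : Cell // c ∈ A}, Edge a b →
          (φ b).1 - transposeCell b.1 = (φ a).1 - transposeCell a.1 := by
        intro a b h
        have hnp : ¬ Pres φ a b := fun hc => hpres ((hall a b h).1 hc)
        have hu := step_unit hB φ h
        have himg : (φ b).1 = (φ a).1 + transposeCell (b.1 - a.1) := by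
          rcases h with h | h <;> rcases hu with hu | hu <;>
            simp only [Pres, transposeCell, Prod.ext_iff, Prod.fst_add, Prod.snd_add,
              Prod.fst_sub, Prod.snd_sub, not_and] at h hu hnp ⊢ <;> omega
        rw [himg, transpose_sub]; abel
      have hconst : ∀ x : Cell, ∀ hx : x ∈ A, ∀ y : Cell, sameComp A x y →
          ∀ hy : y ∈ A, (φ ⟨y, hy⟩).1 - transposeCell y = (φ ⟨x, hx⟩).1 - transposeCell x := by
        intro x hx y hp
        induction hp with
        | refl => intro hy; rfl
        | @tail u v hp hstep ih =>
          intro hv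
          obtain ⟨huA, hvA, hadj⟩ := hstep
          have ihu := ih huA
          rcases cellAdj_cases hadj with hc | hc | hc | hc
          · rw [← ihu]; exact hstepd ⟨u, huA⟩ ⟨v, hvA⟩ (Or.inl hc)
          · rw [← ihu]; exact hstepd ⟨u, huA⟩ ⟨v, hvA⟩ (Or.inr hc)
          · rw [← ihu]; exact (hstepd ⟨v, hvA⟩ ⟨u, huA⟩ (Or.inl hc)).symm
          · rw [← ihu]; exact (hstepd ⟨v, hvA⟩ ⟨u, huA⟩ (Or.inr hc)).symm
      right
      refine ⟨(φ ⟨x0, hx0⟩).1 - transposeCell x0, ?_⟩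
      ext b
      simp only [Finset.mem_image]
      constructor
      · intro hb
        obtain ⟨a', ha'⟩ := hsurj b hb
        refine ⟨transposeCell a'.1, ⟨a'.1, a'.2, rfl⟩, ?_⟩
        have := hconst x0 hx0 a'.1 (hconn x0 hx0 a'.1 a'.2) a'.2
        rw [← this, ← ha']
        abel
      · rintro ⟨c, ⟨a', ha', rfl⟩, rfl⟩
        have := hconst x0 hx0 a' (hconn x0 hx0 a' ha') ha'
        have h2 : transposeCell a' + ((φ ⟨x0, hx0⟩).1 - transposeCell x0) =
            (φ ⟨a', ha'⟩).1 := by rw [← this]; abel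
        rw [h2]
        exact (φ ⟨a', ha'⟩).2

end RigidityMain

section IsoBuilders

/-- Order isomorphism onto the image of a strictly monotone-iff injection. -/
noncomputable def isoImage {A B : Finset Cell} (g : Cell → Cell)
    (hinj : Function.Injective g) (hmono : ∀ a b : Cell, a ≤ b ↔ g a ≤ g b)
    (hB : B = A.image g) : {x : Cell // x ∈ A} ≃o {x : Cell // x ∈ B} where
  toEquiv := Equiv.ofBijective
    (fun x => ⟨g x.1, by rw [hB]; exact Finset.mem_image_of_mem g x.2⟩)
    ⟨fun a b hab => Subtype.ext (hinj (congrArg Subtype.val hab)), fun y => by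
      have hy : y.1 ∈ A.image g := by rw [← hB]; exact y.2
      obtain ⟨a, ha, hga⟩ := Finset.mem_image.1 hy
      exact ⟨⟨a, ha⟩, Subtype.ext hga⟩⟩
  map_rel_iff' := by intro a b; exact (hmono a.1 b.1).symm

/-- Anti-isomorphism onto the image of an order-reversing injection. -/
noncomputable def antiImage {A B : Finset Cell} (g : Cell → Cell)
    (hinj : Function.Injective g) (hanti : ∀ a b : Cell, a ≤ b ↔ g b ≤ g a)
    (hB : B = A.image g) : {x : Cell // x ∈ A} ≃o ({x : Cell // x ∈ B})ᵒᵈ where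
  toEquiv := Equiv.ofBijective
    (fun x => OrderDual.toDual ⟨g x.1, by rw [hB]; exact Finset.mem_image_of_mem g x.2⟩)
    ⟨fun a b hab => Subtype.ext (hinj (congrArg Subtype.val (OrderDual.toDual.injective hab))),
     fun y => by
      have hy : (OrderDual.ofDual y).1 ∈ A.image g := by rw [← hB]; exact (OrderDual.ofDual y).2
      obtain ⟨a, ha, hga⟩ := Finset.mem_image.1 hy
      exact ⟨⟨a, ha⟩, congrArg OrderDual.toDual (Subtype.ext hga)⟩⟩
  map_rel_iff' := by intro a b; exact (hanti a.1 b.1).symm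

lemma rot_inj : Function.Injective rotCell := by
  intro a b h
  obtain ⟨a1,a2⟩ := a; obtain ⟨b1,b2⟩ := b
  simp only [rotCell, Prod.mk.injEq] at *
  omega

lemma image_rot_rot (A : Finset Cell) : (A.image rotCell).image rotCell = A := by
  rw [Finset.image_image]
  have : rotCell ∘ rotCell = id := funext rot_rot
  rw [this, Finset.image_id]

/-- Rotation by 180 degrees as an anti-isomorphism. -/
noncomputable def antiRot (A : Finset Cell) :
    {x : Cell // x ∈ A.image rotCell} ≃o ({x : Cell // x ∈ A})ᵒᵈ :=
  antiImage rotCell rot_inj (fun a b => rot_le_rot.symm) (image_rot_rot A).symm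

/-- Generic subtype-of-subtype iso for a component cut out by a `Finset`. -/
noncomputable def setIso {S : Finset Cell} (C : Finset Cell) (hsub : ∀ x ∈ C, x ∈ S)
    (P : Set {x : Cell // x ∈ S}) (hmem : ∀ b : {x : Cell // x ∈ S}, b ∈ P ↔ b.1 ∈ C) :
    ↥P ≃o {x : Cell // x ∈ C} where
  toFun x := ⟨x.1.1, (hmem x.1).1 x.2⟩
  invFun y := ⟨⟨y.1, hsub y.1 y.2⟩, (hmem _).2 y.2⟩
  left_inv x := by apply Subtype.ext; apply Subtype.ext; rfl
  right_inv y := by apply Subtype.ext; rfl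
  map_rel_iff' := Iff.rfl

end IsoBuilders

section Components

variable {S : Finset Cell} {s : ℕ} {c : Fin s → Finset Cell}

lemma comp_skew (hS : IsSkewDiagram S) (hsub : ∀ i, c i ⊆ S)
    (hcomp : ∀ i, ∀ x ∈ c i, ∀ y : Cell, (y ∈ c i ↔ sameComp S x y)) (i : Fin s) :
    IsSkewDiagram (c i) := by
  intro a b x ha hb hax hxb
  have hxS : x ∈ S := hS _ _ _ (hsub i ha) (hsub i hb) hax hxb
  exact (hcomp i a ha x).2 (sameComp_of_le' hS (hsub i ha) hxS hax)

lemma comp_conn (hS : IsSkewDiagram S)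
    (hcomp : ∀ i, ∀ x ∈ c i, ∀ y : Cell, (y ∈ c i ↔ sameComp S x y)) (i : Fin s) :
    ∀ x ∈ c i, ∀ y ∈ c i, sameComp (c i) x y := by
  have key : ∀ x y : Cell, sameComp S x y → x ∈ c i → sameComp (c i) x y := by
    intro x y h
    induction h with
    | refl => intro _; exact Relation.ReflTransGen.refl
    | @tail u v hp hstep ih =>
      intro hx
      have huc : u ∈ c i := (hcomp i x hx u).2 hp
      have hvc : v ∈ c i := (hcomp i x hx v).2 (hp.tail hstep)
      exact (ih hx).tail ⟨huc, hvc, hstep.2.2⟩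
  intro x hx y hy
  exact key x y ((hcomp i x hx y).1 hy) hx

/-- membership of a cell of `S` in a component is a component-membership test. -/
lemma mem_class_iff (hS : IsSkewDiagram S)
    (hcomp : ∀ i, ∀ x ∈ c i, ∀ y : Cell, (y ∈ c i ↔ sameComp S x y)) (i : Fin s)
    (a : {x : Cell // x ∈ S}) (ha : a.1 ∈ c i) (b : {x : Cell // x ∈ S}) :
    b ∈ {b : {x : Cell // x ∈ S} | zigzagRel a b} ↔ b.1 ∈ c i :=
  (zigzag_iff_sameComp hS a b).trans (hcomp i a.1 ha b.1).symm

end Components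

section CompEquiv

variable {S : Finset Cell} {s : ℕ} {c : Fin s → Finset Cell}

noncomputable def compPt (hne : ∀ i, (c i).Nonempty) (hsub : ∀ i, c i ⊆ S) (i : Fin s) :
    {x : Cell // x ∈ S} := ⟨(hne i).choose, hsub i (hne i).choose_spec⟩

lemma compPt_mem (hne : ∀ i, (c i).Nonempty) (hsub : ∀ i, c i ⊆ S) (i : Fin s) :
    (compPt hne hsub i).1 ∈ c i := (hne i).choose_spec

noncomputable def compEquiv (hS : IsSkewDiagram S) (hne : ∀ i, (c i).Nonempty)
    (hsub : ∀ i, c i ⊆ S) (hpart : ∀ x ∈ S, ∃! i, x ∈ c i)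
    (hcomp : ∀ i, ∀ x ∈ c i, ∀ y : Cell, (y ∈ c i ↔ sameComp S x y)) :
    Fin s ≃ {P : Set {x : Cell // x ∈ S} // ∃ a, P = {b | zigzagRel a b}} :=
  Equiv.ofBijective
    (fun i => ⟨{b | zigzagRel (compPt hne hsub i) b}, ⟨_, rfl⟩⟩)
    (by
      constructor
      · intro i j hij
        have hset := congrArg Subtype.val hij
        simp only at hset
        have hj : compPt hne hsub j ∈ {b | zigzagRel (compPt hne hsub j) b} :=
          Relation.ReflTransGen.refl
        rw [← hset] at hj
        have hjc : (compPt hne hsub j).1 ∈ c i :=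
          (mem_class_iff hS hcomp i _ (compPt_mem hne hsub i) _).1 hj
        obtain ⟨k, -, huniq⟩ := hpart (compPt hne hsub j).1 (compPt hne hsub j).2
        exact (huniq i hjc).trans (huniq j (compPt_mem hne hsub j)).symm
      · rintro ⟨P, a, rfl⟩
        obtain ⟨k, hk, -⟩ := hpart a.1 a.2
        refine ⟨k, Subtype.ext ?_⟩
        simp only
        refine class_eq_of_zigzag ?_
        exact (zigzag_iff_sameComp hS _ _).2 ((hcomp k _ (compPt_mem hne hsub k) a.1).1 hk))

lemma compEquiv_mem (hS : IsSkewDiagram S) (hne : ∀ i, (c i).Nonempty)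
    (hsub : ∀ i, c i ⊆ S) (hpart : ∀ x ∈ S, ∃! i, x ∈ c i)
    (hcomp : ∀ i, ∀ x ∈ c i, ∀ y : Cell, (y ∈ c i ↔ sameComp S x y)) (i : Fin s)
    (b : {x : Cell // x ∈ S}) :
    b ∈ (compEquiv hS hne hsub hpart hcomp i).1 ↔ b.1 ∈ c i :=
  mem_class_iff hS hcomp i _ (compPt_mem hne hsub i) b

lemma conn_image_rot {A : Finset Cell} (hconn : ∀ x ∈ A, ∀ y ∈ A, sameComp A x y) :
    ∀ x ∈ A.image rotCell, ∀ y ∈ A.image rotCell, sameComp (A.image rotCell) x y := by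
  intro x hx y hy
  have h := hconn _ (mem_image_rot.1 hx) _ (mem_image_rot.1 hy)
  have := sameComp_image_rot h
  rwa [rot_rot, rot_rot] at this

end CompEquiv

section Final

lemma inj_addv (v : Cell) : Function.Injective (· + v : Cell → Cell) :=
  fun a b h => by simpa using congrArg (· - v) h

lemma trans_inj : Function.Injective transposeCell := by
  intro a b h
  obtain ⟨a1,a2⟩ := a; obtain ⟨b1,b2⟩ := b
  simp only [transposeCell, Prod.mk.injEq] at *
  omega

lemma mono_addv (v : Cell) (a b : Cell) : a ≤ b ↔ a + v ≤ b + v :=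
  (add_le_add_iff_right v).symm

lemma mono_transv (v : Cell) (a b : Cell) :
    a ≤ b ↔ transposeCell a + v ≤ transposeCell b + v := by
  rw [← mono_addv v, transpose_le_transpose]

lemma anti_rotv (v : Cell) (a b : Cell) :
    a ≤ b ↔ rotCell b + v ≤ rotCell a + v := by
  rw [← mono_addv v, rot_le_rot]

lemma anti_rottransv (v : Cell) (a b : Cell) :
    a ≤ b ↔ rotCell (transposeCell b) + v ≤ rotCell (transposeCell a) + v := by
  rw [← mono_addv v, rot_le_rot, transpose_le_transpose]

/-- let `θ`, `θ′` be skew diagrams with connected components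
`θ^1, …, θ^s` and `θ′^1, …, θ′^t`.  Then `P(θ)` and `P(θ′)` are semi-isomorphic
iff `s = t` and there is a permutation `σ` matching each component `θ^i` with
`θ′^{σ(i)}` up to translation, transposition, 180-degree rotation (`†`), or
rotation of the transpose.  (The poset `P(θ)` generated by the covering relations
is the componentwise order carried by the subtype of cells of `θ`.) -/
theorem semiIso_iff_components_match
    (S T : Finset Cell) (hS : IsSkewDiagram S) (hT : IsSkewDiagram T)
    (s t : ℕ) (c : Fin s → Finset Cell) (c' : Fin t → Finset Cell)
    (hne : ∀ i, (c i).Nonempty) (hne' : ∀ i, (c' i).Nonempty)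
    (hsub : ∀ i, c i ⊆ S) (hsub' : ∀ i, c' i ⊆ T)
    (hpart : ∀ x ∈ S, ∃! i, x ∈ c i) (hpart' : ∀ x ∈ T, ∃! i, x ∈ c' i)
    (hcomp : ∀ i, ∀ x ∈ c i, ∀ y : Cell, (y ∈ c i ↔ sameComp S x y))
    (hcomp' : ∀ i, ∀ x ∈ c' i, ∀ y : Cell, (y ∈ c' i ↔ sameComp T x y)) :
    SemiIso {x : Cell // x ∈ S} {x : Cell // x ∈ T} ↔
      ∃ σ : Fin s ≃ Fin t, ∀ i,
        TranslateEq (c i) (c' (σ i)) ∨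
        TranslateEq ((c i).image transposeCell) (c' (σ i)) ∨
        TranslateEq ((c i).image rotCell) (c' (σ i)) ∨
        TranslateEq (((c i).image transposeCell).image rotCell) (c' (σ i)) := by
  classical
  constructor
  · rintro ⟨f, hf⟩
    refine ⟨(compEquiv hS hne hsub hpart hcomp).trans (f.trans (compEquiv hT hne' hsub' hpart' hcomp').symm), ?_⟩
    intro i
    set j := ((compEquiv hS hne hsub hpart hcomp).trans (f.trans (compEquiv hT hne' hsub' hpart' hcomp').symm)) i with hj
    have hfe : f ((compEquiv hS hne hsub hpart hcomp) i) = (compEquiv hT hne' hsub' hpart' hcomp') j := by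
      rw [hj]
      simp only [Equiv.trans_apply]
      exact ((compEquiv hT hne' hsub' hpart' hcomp').apply_symm_apply _).symm
    have hiso := hf ((compEquiv hS hne hsub hpart hcomp) i)
    rw [hfe] at hiso
    have isoS : ↥(((compEquiv hS hne hsub hpart hcomp) i).1) ≃o {x : Cell // x ∈ c i} :=
      setIso (c i) (fun x hx => hsub i hx) _
        (fun b => compEquiv_mem hS hne hsub hpart hcomp i b)
    have isoT : ↥(((compEquiv hT hne' hsub' hpart' hcomp') j).1) ≃o {x : Cell // x ∈ c' j} :=
      setIso (c' j) (fun x hx => hsub' j hx) _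
        (fun b => compEquiv_mem hT hne' hsub' hpart' hcomp' j b)
    rcases hiso with hiso1 | hiso1
    all_goals obtain ⟨ψ⟩ := hiso1
    · have χ : {x : Cell // x ∈ c i} ≃o {x : Cell // x ∈ c' j} :=
        isoS.symm.trans (ψ.trans isoT)
      rcases rigidity (comp_skew hS hsub hcomp i) (comp_skew hT hsub' hcomp' j)
        (comp_conn hS hcomp i) (hne i) χ with h | h
      · exact Or.inl h
      · exact Or.inr (Or.inl h)
    · have χ : {x : Cell // x ∈ c i} ≃o ({x : Cell // x ∈ c' j})ᵒᵈ :=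
        isoS.symm.trans (ψ.trans isoT.dual)
      have ψ' : {x : Cell // x ∈ (c i).image rotCell} ≃o {x : Cell // x ∈ c' j} :=
        (antiRot (c i)).trans (χ.dual.trans (OrderIso.dualDual _).symm)
      rcases rigidity (isSkew_image_rot (comp_skew hS hsub hcomp i))
        (comp_skew hT hsub' hcomp' j) (conn_image_rot (comp_conn hS hcomp i))
        ((hne i).image _) ψ' with h | h
      · exact Or.inr (Or.inr (Or.inl h))
      · refine Or.inr (Or.inr (Or.inr ?_))
        rwa [image_trans_rot_comm] at h
  · rintro ⟨σ, hσ⟩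
    refine ⟨(compEquiv hS hne hsub hpart hcomp).symm.trans (σ.trans (compEquiv hT hne' hsub' hpart' hcomp')), ?_⟩
    intro P
    obtain ⟨i, rfl⟩ : ∃ i, P = (compEquiv hS hne hsub hpart hcomp) i := ⟨(compEquiv hS hne hsub hpart hcomp).symm P, ((compEquiv hS hne hsub hpart hcomp).apply_symm_apply P).symm⟩
    have hfP : ((compEquiv hS hne hsub hpart hcomp).symm.trans (σ.trans (compEquiv hT hne' hsub' hpart' hcomp'))) ((compEquiv hS hne hsub hpart hcomp) i) = (compEquiv hT hne' hsub' hpart' hcomp') (σ i) := by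
      simp only [Equiv.trans_apply, Equiv.symm_apply_apply]
    rw [hfP]
    have isoS : ↥(((compEquiv hS hne hsub hpart hcomp) i).1) ≃o {x : Cell // x ∈ c i} :=
      setIso (c i) (fun x hx => hsub i hx) _
        (fun b => compEquiv_mem hS hne hsub hpart hcomp i b)
    have isoT : ↥(((compEquiv hT hne' hsub' hpart' hcomp') (σ i)).1) ≃o {x : Cell // x ∈ c' (σ i)} :=
      setIso (c' (σ i)) (fun x hx => hsub' (σ i) hx) _
        (fun b => compEquiv_mem hT hne' hsub' hpart' hcomp' (σ i) b)
    rcases hσ i with ⟨v, hv⟩ | ⟨v, hv⟩ | ⟨v, hv⟩ | ⟨v, hv⟩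
    · have ψ : {x : Cell // x ∈ c i} ≃o {x : Cell // x ∈ c' (σ i)} :=
        isoImage (· + v) (inj_addv v) (mono_addv v) hv
      exact Or.inl ⟨isoS.trans (ψ.trans isoT.symm)⟩
    · rw [Finset.image_image] at hv
      have ψ : {x : Cell // x ∈ c i} ≃o {x : Cell // x ∈ c' (σ i)} :=
        isoImage ((· + v) ∘ transposeCell) ((inj_addv v).comp trans_inj)
          (fun a b => mono_transv v a b) hv
      exact Or.inl ⟨isoS.trans (ψ.trans isoT.symm)⟩
    · rw [Finset.image_image] at hv
      have ψ : {x : Cell // x ∈ c i} ≃o ({x : Cell // x ∈ c' (σ i)})ᵒᵈ :=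
        antiImage ((· + v) ∘ rotCell) ((inj_addv v).comp rot_inj)
          (fun a b => anti_rotv v a b) hv
      exact Or.inr ⟨isoS.trans (ψ.trans isoT.symm.dual)⟩
    · rw [Finset.image_image, Finset.image_image] at hv
      have ψ : {x : Cell // x ∈ c i} ≃o ({x : Cell // x ∈ c' (σ i)})ᵒᵈ :=
        antiImage ((· + v) ∘ (rotCell ∘ transposeCell))
          ((inj_addv v).comp (rot_inj.comp trans_inj))
          (fun a b => anti_rottransv v a b) hv
      exact Or.inr ⟨isoS.trans (ψ.trans isoT.symm.dual)⟩

end Final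
end
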